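/- arXiv:2604.22611 — 6 statements merged into one kernel-verified Lean document; each statement's English description precedes it below -/
import Mathlib

section
/- Let f be a fitness function on the biallelic hypercube {0,1}^L with no two adjacent genotypes having equal fitness. If there exist two genotypes g and h at Hamming distance d ≥ 2 such that exactly one direct accessible path (a fitness-increasing path of length d in which the Hamming distance to h decreases by 1 at each step) connects g to h, then the landscape contains a simple sign epistasis motif, i.e., a 2-dimensional face {g', g'_[i], g'_[j], g'_[i,j]} in which exactly one of the two mutations i, j changes the sign of its fitness effect depending on the presence of the other. -/
/-- Flip coordinate `i` of a biallelic genotype. -/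
def flp {L : ℕ} (g : Fin L → Bool) (i : Fin L) : Fin L → Bool :=
  Function.update g i (!g i)

/-- Hamming distance between genotypes. -/
def hamming {L : ℕ} (g h : Fin L → Bool) : ℕ :=
  (Finset.univ.filter fun i => g i ≠ h i).card

/-- Endpoint of the path obtained by applying a list of coordinate flips. -/
def walk {L : ℕ} (g : Fin L → Bool) : List (Fin L) → (Fin L → Bool)
  | [] => g
  | i :: l => walk (flp g i) l

/-- A path (list of flips) is accessible if fitness strictly increases at every step. -/
def Accessible {L : ℕ} (f : (Fin L → Bool) → ℝ) : (Fin L → Bool) → List (Fin L) → Prop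
  | _, [] => True
  | g, i :: l => f g < f (flp g i) ∧ Accessible f (flp g i) l

/-- Mutation `i` changes the sign of its fitness effect depending on the presence of
mutation `j`. -/
def SignFlip {L : ℕ} (f : (Fin L → Bool) → ℝ) (g : Fin L → Bool) (i j : Fin L) : Prop :=
  ¬ ((f g < f (flp g i)) ↔ (f (flp g j) < f (flp (flp g j) i)))

/-- Simple sign epistasis on the square motif at background `g`, loci `i ≠ j`:
exactly one of the two mutations changes sign. -/
def SSE {L : ℕ} (f : (Fin L → Bool) → ℝ) (g : Fin L → Bool) (i j : Fin L) : Prop :=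
  Xor' (SignFlip f g i j) (SignFlip f g j i)

/-- Reciprocal sign epistasis: both mutations change sign. -/
def RSE {L : ℕ} (f : (Fin L → Bool) → ℝ) (g : Fin L → Bool) (i j : Fin L) : Prop :=
  SignFlip f g i j ∧ SignFlip f g j i

/-- A peak (local fitness maximum). -/
def Peak {L : ℕ} (f : (Fin L → Bool) → ℝ) (g : Fin L → Bool) : Prop :=
  ∀ i, f (flp g i) < f g

lemma flp_apply {L : ℕ} (g : Fin L → Bool) (i x : Fin L) :
    flp g i x = if x = i then !g i else g x := by
  simp [flp, Function.update_apply]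

lemma flp_flp_self {L : ℕ} (g : Fin L → Bool) (i : Fin L) : flp (flp g i) i = g := by
  funext x
  by_cases hx : x = i <;> simp [flp_apply, hx]

lemma flp_comm {L : ℕ} (g : Fin L → Bool) {i j : Fin L} (hij : i ≠ j) :
    flp (flp g i) j = flp (flp g j) i := by
  funext x
  by_cases hx : x = i <;> by_cases hy : x = j <;>
    simp_all [flp_apply]

lemma walk_append {L : ℕ} (g : Fin L → Bool) (l1 l2 : List (Fin L)) :
    walk g (l1 ++ l2) = walk (walk g l1) l2 := by
  induction l1 generalizing g with
  | nil => rfl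
  | cons a t ih => simp [walk, ih]

lemma accessible_append {L : ℕ} (f : (Fin L → Bool) → ℝ) (g : Fin L → Bool)
    (l1 l2 : List (Fin L)) :
    Accessible f g (l1 ++ l2) ↔ Accessible f g l1 ∧ Accessible f (walk g l1) l2 := by
  induction l1 generalizing g with
  | nil => simp [Accessible, walk]
  | cons a t ih => simp [Accessible, walk, ih, and_assoc]

lemma hamming_triangle {L : ℕ} (a b c : Fin L → Bool) :
    hamming a c ≤ hamming a b + hamming b c := by
  unfold hamming
  refine le_trans (Finset.card_le_card ?_) (Finset.card_union_le _ _)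
  intro x hx
  simp only [Finset.mem_union, Finset.mem_filter, Finset.mem_univ, true_and] at *
  by_contra hcon
  push_neg at hcon
  exact hx (hcon.1.trans hcon.2)

lemma hamming_flp_le {L : ℕ} (g : Fin L → Bool) (i : Fin L) :
    hamming g (flp g i) ≤ 1 := by
  unfold hamming
  have : (Finset.univ.filter fun x => g x ≠ flp g i x) ⊆ {i} := by
    intro x hx
    simp only [Finset.mem_filter, Finset.mem_univ, true_and, Finset.mem_singleton] at *
    by_contra hxi
    exact hx (by simp [flp_apply, hxi])
  simpa using Finset.card_le_card this

lemma hamming_walk_le {L : ℕ} (g : Fin L → Bool) (l : List (Fin L)) :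
    hamming g (walk g l) ≤ l.length := by
  induction l generalizing g with
  | nil => simp [walk, hamming]
  | cons a t ih =>
      calc hamming g (walk g (a :: t))
          ≤ hamming g (flp g a) + hamming (flp g a) (walk (flp g a) t) :=
            hamming_triangle _ _ _
        _ ≤ 1 + t.length := Nat.add_le_add (hamming_flp_le g a) (ih (flp g a))
        _ = (a :: t).length := by simp [Nat.add_comm]

lemma exists_last_two {α : Type*} (l : List α) (h : 2 ≤ l.length) :
    ∃ (p : List α) (i j : α), l = p ++ [i, j] := by
  rcases hr : l.reverse with _ | ⟨a, _ | ⟨b, r⟩⟩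
  · simp_all
  · have := congrArg List.length hr; simp at this; omega
  · refine ⟨r.reverse, b, a, ?_⟩
    have : l = l.reverse.reverse := (List.reverse_reverse l).symm
    rw [this, hr]
    simp


/-- if two genotypes at Hamming distance ≥ 2 are connected by exactly one
direct accessible path, the landscape contains an SSE motif. -/
theorem stmt_0 (L : ℕ) (f : (Fin L → Bool) → ℝ)
    (hne : ∀ (g : Fin L → Bool) (i : Fin L), f (flp g i) ≠ f g)
    (g h : Fin L → Bool) (hd : 2 ≤ hamming g h)
    (huniq : ∃! l : List (Fin L),
      l.length = hamming g h ∧ walk g l = h ∧ Accessible f g l) :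
    ∃ (g' : Fin L → Bool) (i j : Fin L), i ≠ j ∧ SSE f g' i j := by
  obtain ⟨l, ⟨hlen, hwalk, hacc⟩, huq⟩ := huniq
  have hl2 : 2 ≤ l.length := by omega
  obtain ⟨p, i, j, rfl⟩ := exists_last_two l hl2
  set b := walk g p with hb
  have hwb : walk g (p ++ [i, j]) = flp (flp b i) j := by
    rw [walk_append]; rfl
  have hwalk' : flp (flp b i) j = h := by rw [← hwb]; exact hwalk
  have hap : Accessible f g p ∧ (f b < f (flp b i) ∧ f (flp b i) < f (flp (flp b i) j)) := by
    have := (accessible_append f g p [i, j]).mp hacc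
    exact ⟨this.1, this.2.1, this.2.2.1⟩
  obtain ⟨haccp, h1, h2⟩ := hap
  -- i ≠ j
  have hij : i ≠ j := by
    rintro rfl
    have : h = b := by rw [← hwalk', flp_flp_self]
    have hle : hamming g h ≤ p.length := by
      rw [this, hb]; exact hamming_walk_le g p
    have : (p ++ [i, i]).length = p.length + 2 := by simp
    omega
  -- swapped path is not accessible
  have hnot : ¬ Accessible f g (p ++ [j, i]) := by
    intro hcon
    have hne' : p ++ [j, i] ≠ p ++ [i, j] := by
      intro hcon2
      have := List.append_cancel_left hcon2
      simp at this
      exact hij this.1.symm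
    apply hne'
    apply huq
    refine ⟨by simpa using hlen, ?_, hcon⟩
    rw [walk_append]
    show flp (flp b j) i = h
    rw [flp_comm b hij.symm]
    exact hwalk'
  have hnot2 : ¬ (f b < f (flp b j) ∧ f (flp b j) < f (flp (flp b j) i)) := by
    intro hcon
    apply hnot
    rw [accessible_append]
    exact ⟨haccp, hcon.1, hcon.2, trivial⟩
  have hflpji : flp (flp b j) i = flp (flp b i) j := flp_comm b hij.symm ▸ rfl
  -- the alternate corner equals h
  have hcorner : flp (flp b j) i = h := by rw [hflpji]; exact hwalk'
  have hne1 : f (flp b j) ≠ f b := hne b j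
  rcases lt_or_gt_of_ne hne1 with hlt | hgt
  · -- f (flp b j) < f b : SignFlip f b j i holds, SignFlip f b i j fails
    refine ⟨b, i, j, hij, ?_⟩
    right
    constructor
    · -- SignFlip f b j i
      unfold SignFlip
      intro hiff
      have : f (flp b i) < f (flp (flp b i) j) := h2
      have := hiff.mpr this
      linarith
    · -- ¬ SignFlip f b i j
      unfold SignFlip
      intro hcon
      apply hcon
      constructor
      · intro _
        have : f (flp (flp b j) i) = f (flp (flp b i) j) := by rw [hflpji]
        linarith
      · intro _; exact h1
  · -- f b < f (flp b j) : then f (flp (flp b j) i) < f (flp b j)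
    have hne2 : f (flp (flp b j) i) ≠ f (flp b j) := hne (flp b j) i
    have hlt2 : f (flp (flp b j) i) < f (flp b j) := by
      rcases lt_or_gt_of_ne hne2 with h' | h'
      · exact h'
      · exact absurd ⟨hgt, h'⟩ hnot2
    refine ⟨b, i, j, hij, ?_⟩
    left
    constructor
    · -- SignFlip f b i j
      unfold SignFlip
      intro hiff
      have := hiff.mp h1
      linarith
    · -- ¬ SignFlip f b j i
      unfold SignFlip
      intro hcon
      apply hcon
      constructor
      · intro _
        have : f (flp (flp b i) j) = f (flp (flp b j) i) := by rw [hflpji]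
        linarith
      · intro _; exact hgt
end

section
/- Let f be a fitness function on the biallelic hypercube {0,1}^L with no two adjacent genotypes having equal fitness. If the landscape has at least two peaks (local fitness maxima), then it contains a reciprocal sign epistasis motif. -/
namespace PoelAux

variable {L : ℕ}

lemma flp_apply (g : Fin L → Bool) (i x : Fin L) :
    flp g i x = if x = i then !g i else g x := by
  simp [flp, Function.update_apply]

lemma flp_flp (g : Fin L → Bool) (i : Fin L) : flp (flp g i) i = g := by
  funext x
  by_cases h : x = i <;> simp [flp_apply, h]

lemma flp_comm (g : Fin L → Bool) {i j : Fin L} (hij : i ≠ j) :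
    flp (flp g i) j = flp (flp g j) i := by
  funext x
  rcases eq_or_ne x i with rfl | hxi
  · simp [flp_apply, hij, hij.symm]
  · rcases eq_or_ne x j with rfl | hxj
    · simp [flp_apply, hij.symm, hxi]
    · simp [flp_apply, hxi, hxj]

/-- weight of a genotype -/
noncomputable def w (f : (Fin L → Bool) → ℝ) (v : Fin L → Bool) : ℕ :=
  (Finset.univ.filter fun u => f u ≤ f v).card

lemma w_lt {f : (Fin L → Bool) → ℝ} {a b : Fin L → Bool} (h : f a < f b) :
    w f a < w f b := by
  apply Finset.card_lt_card
  constructor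
  · intro u hu
    simp only [Finset.mem_filter, Finset.mem_univ, true_and] at *
    exact hu.trans h.le
  · intro hsub
    have := hsub (by simp : b ∈ Finset.univ.filter fun u => f u ≤ f b)
    simp only [Finset.mem_filter, Finset.mem_univ, true_and] at this
    exact absurd this (not_le.2 h)

lemma w_le (f : (Fin L → Bool) → ℝ) (v : Fin L → Bool) : w f v ≤ 2 ^ L := by
  calc w f v ≤ (Finset.univ : Finset (Fin L → Bool)).card := Finset.card_filter_le _ _
  _ = 2 ^ L := by simp [Finset.card_univ]

/-- measure of a path: sum of weights of all vertices visited. -/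
noncomputable def nu (f : (Fin L → Bool) → ℝ) : (Fin L → Bool) → List (Fin L) → ℕ
  | g, [] => w f g
  | g, i :: l => w f g + nu f (flp g i) l

lemma nu_nil (f : (Fin L → Bool) → ℝ) (g : Fin L → Bool) : nu f g [] = w f g := rfl

lemma nu_cons (f : (Fin L → Bool) → ℝ) (g : Fin L → Bool) (i : Fin L) (l : List (Fin L)) :
    nu f g (i :: l) = w f g + nu f (flp g i) l := rfl

lemma nu_le (f : (Fin L → Bool) → ℝ) (l : List (Fin L)) (g : Fin L → Bool) :
    nu f g l ≤ (l.length + 1) * 2 ^ L := by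
  induction l generalizing g with
  | nil => simpa [nu_nil] using w_le f g
  | cons i l ih =>
    have := ih (flp g i)
    have hw := w_le f g
    rw [nu_cons, List.length_cons]
    calc w f g + nu f (flp g i) l ≤ 2 ^ L + (l.length + 1) * 2 ^ L := by omega
    _ = (l.length + 1 + 1) * 2 ^ L := by ring

/-- square lemma from absence of RSE -/
lemma square {f : (Fin L → Bool) → ℝ}
    (noRSE : ∀ (g : Fin L → Bool) (i j : Fin L), i ≠ j → ¬ RSE f g i j)
    {m : Fin L → Bool} {i j : Fin L} (hij : i ≠ j)
    (hi : f m < f (flp m i)) (hj : f m < f (flp m j)) :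
    f (flp m j) < f (flp (flp m j) i) ∨ f (flp m i) < f (flp (flp m i) j) := by
  have h := noRSE m i j hij
  rw [RSE, not_and_or] at h
  rcases h with h | h
  · left
    rw [SignFlip, not_not] at h
    exact h.1 hi
  · right
    rw [SignFlip, not_not] at h
    exact h.1 hj

/-- Main improvement lemma. -/
lemma improve {f : (Fin L → Bool) → ℝ}
    (hne : ∀ (g : Fin L → Bool) (i : Fin L), f (flp g i) ≠ f g)
    (noRSE : ∀ (g : Fin L → Bool) (i j : Fin L), i ≠ j → ¬ RSE f g i j) :
    ∀ (l : List (Fin L)) (m' : Fin L → Bool) (j : Fin L),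
      (j :: l).Nodup → Peak f (walk m' (j :: l)) → f (flp m' j) < f m' →
      ∃ l', walk m' l' = walk m' (j :: l) ∧ l'.Nodup ∧
        l'.length = l.length + 1 ∧ (∀ x ∈ l', x ∈ j :: l) ∧
        nu f m' (j :: l) < nu f m' l' := by
  intro l
  induction l with
  | nil =>
    intro m' j _ hpk hdec
    exfalso
    have := hpk j
    rw [show walk m' [j] = flp m' j from rfl, flp_flp] at this
    exact absurd hdec (not_lt.2 this.le)
  | cons i l₂ ih =>
    intro m' j hnd hpk hdec
    have hij : j ≠ i := by simp at hnd; tauto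
    rcases lt_or_gt_of_ne (hne (flp m' j) i) with hup | hdown
    · -- descend further: f (flp (flp m' j) i) < f (flp m' j)
      have hnd' : (i :: l₂).Nodup := hnd.of_cons
      obtain ⟨l₂', hw, hnd₂, hlen, hsub, hnu⟩ := ih (flp m' j) i hnd' hpk hup
      refine ⟨j :: l₂', hw, ?_, by simpa using hlen, ?_, ?_⟩
      · rw [List.nodup_cons]
        refine ⟨fun hmem => ?_, hnd₂⟩
        have := hsub j hmem
        simp at hnd this
        tauto
      · intro x hx
        rcases List.mem_cons.1 hx with rfl | hx
        · exact List.mem_cons_self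
        · exact List.mem_cons_of_mem _ (hsub x hx)
      · simp only [nu_cons] at hnu ⊢
        omega
    · -- local minimum at m := flp m' j: swap
      have hjm : f (flp m' j) < f m' := hdec
      have hj' : f (flp m' j) < f (flp (flp m' j) j) := by rw [flp_flp]; exact hjm
      have hsq := square noRSE (Ne.symm hij) hdown hj'
      rw [flp_flp] at hsq
      -- hsq : f m' < f (flp m' i) ∨ f (flp (flp m' j) i) < f (flp (flp (flp m' j) i) j)
      have hcm : flp (flp (flp m' j) i) j = flp m' i := by
        rw [flp_comm (flp m' j) (Ne.symm hij), flp_flp]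
      rw [hcm] at hsq
      have hkey : f (flp m' j) < f (flp m' i) := by
        rcases hsq with h | h
        · exact hjm.trans h
        · exact hdown.trans h
      refine ⟨i :: j :: l₂, ?_, ?_, by simp, ?_, ?_⟩
      · show walk (flp (flp m' i) j) l₂ = walk (flp (flp m' j) i) l₂
        rw [flp_comm m' (Ne.symm hij)]
      · simp only [List.nodup_cons] at hnd ⊢
        simp at hnd ⊢
        tauto
      · intro x hx; simp at hx ⊢; tauto
      · simp only [nu_cons, flp_comm m' (Ne.symm hij)]
        have := w_lt hkey
        omega

end PoelAux

namespace PoelAux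

lemma walk_nodup_apply {L : ℕ} : ∀ (l : List (Fin L)), l.Nodup →
    ∀ (g : Fin L → Bool) (x : Fin L), walk g l x = if x ∈ l then !g x else g x := by
  intro l
  induction l with
  | nil => intro _ g x; simp [walk]
  | cons a l ih =>
    intro hnd g x
    have ha : a ∉ l := (List.nodup_cons.1 hnd).1
    rw [show walk g (a :: l) = walk (flp g a) l from rfl, ih (List.nodup_cons.1 hnd).2]
    rcases eq_or_ne x a with rfl | hxa
    · simp [if_neg ha, flp_apply]
    · by_cases hxl : x ∈ l
      · simp [hxl, List.mem_cons, hxa, flp_apply]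
      · have : x ∉ a :: l := by simp [hxa, hxl]
        simp [hxl, this, flp_apply, hxa]

lemma exists_initial {L : ℕ} (p q : Fin L → Bool) :
    ∃ l : List (Fin L), l.Nodup ∧ walk p l = q := by
  refine ⟨(Finset.univ.filter fun i => p i ≠ q i).toList, Finset.nodup_toList _, ?_⟩
  funext x
  rw [walk_nodup_apply _ (Finset.nodup_toList _)]
  by_cases h : p x = q x
  · simp [Finset.mem_toList, h]
  · simp only [Finset.mem_toList, Finset.mem_filter, Finset.mem_univ, true_and, ne_eq, h,
      not_false_iff, if_true]
    cases hpx : p x <;> cases hqx : q x <;> simp_all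

end PoelAux

/-- Poelwijk's theorem: at least two peaks imply the existence of an RSE motif. -/
theorem stmt_4 (L : ℕ) (f : (Fin L → Bool) → ℝ)
    (hne : ∀ (g : Fin L → Bool) (i : Fin L), f (flp g i) ≠ f g)
    (p q : Fin L → Bool) (hp : Peak f p) (hq : Peak f q) (hpq : p ≠ q) :
    ∃ (g : Fin L → Bool) (i j : Fin L), i ≠ j ∧ RSE f g i j := by
  by_contra hcon
  push_neg at hcon
  have grow : ∀ n : ℕ, ∃ l : List (Fin L), l.Nodup ∧ walk p l = q ∧ n ≤ PoelAux.nu f p l := by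
    intro n
    induction n with
    | zero =>
      obtain ⟨l, h1, h2⟩ := PoelAux.exists_initial p q
      exact ⟨l, h1, h2, Nat.zero_le _⟩
    | succ n ih =>
      obtain ⟨l, hnd, hw, hn⟩ := ih
      cases l with
      | nil => exact absurd hw hpq
      | cons j l₀ =>
        obtain ⟨l', hw', hnd', _, _, hnu'⟩ :=
          PoelAux.improve hne hcon l₀ p j hnd (hw ▸ hq) (hp j)
        exact ⟨l', hnd', hw'.trans hw, by omega⟩
  obtain ⟨l, hnd, hw, hn⟩ := grow ((L + 1) * 2 ^ L + 1)
  have h1 := PoelAux.nu_le f l p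
  have h2 : l.length ≤ L := by
    have := List.Nodup.length_le_card hnd
    simpa using this
  have h3 : (l.length + 1) * 2 ^ L ≤ (L + 1) * 2 ^ L :=
    Nat.mul_le_mul_right _ (by omega)
  omega
end

section
/- Let f be a fitness function on the biallelic hypercube {0,1}^L with no two adjacent genotypes having equal fitness. If there exists a genotype g that has no direct accessible (fitness-increasing, Hamming-distance-decreasing at each step) path to any peak of the landscape, then the landscape contains a reciprocal sign epistasis motif. -/
namespace Stmt5Aux

lemma flp_apply_self {L : ℕ} (g : Fin L → Bool) (i : Fin L) : flp g i i = !g i := by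
  simp [flp]

lemma flp_apply_ne {L : ℕ} (g : Fin L → Bool) {i x : Fin L} (h : x ≠ i) : flp g i x = g x := by
  simp [flp, Function.update_of_ne h]

lemma flp_flp_self {L : ℕ} (g : Fin L → Bool) (i : Fin L) : flp (flp g i) i = g := by
  funext x
  by_cases h : x = i
  · subst h; simp [flp]
  · rw [flp_apply_ne _ h, flp_apply_ne _ h]

lemma flp_comm {L : ℕ} (g : Fin L → Bool) {i j : Fin L} (h : i ≠ j) :
    flp (flp g i) j = flp (flp g j) i := by
  funext x
  by_cases hxi : x = i
  · subst hxi
    rw [flp_apply_ne _ h, flp_apply_self, flp_apply_self, flp_apply_ne _ h]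
  · by_cases hxj : x = j
    · subst hxj
      rw [flp_apply_self, flp_apply_ne _ (Ne.symm h), flp_apply_ne _ (Ne.symm h), flp_apply_self]
    · rw [flp_apply_ne _ hxj, flp_apply_ne _ hxi, flp_apply_ne _ hxi, flp_apply_ne _ hxj]

/-- Sum of fitnesses of all vertices visited along a path. -/
noncomputable def pathSum {L : ℕ} (f : (Fin L → Bool) → ℝ) :
    (Fin L → Bool) → List (Fin L) → ℝ
  | g, [] => f g
  | g, i :: l => f g + pathSum f (flp g i) l

lemma walk_apply {L : ℕ} (l : List (Fin L)) :
    ∀ (g : Fin L → Bool) (x : Fin L),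
      walk g l x = if l.count x % 2 = 1 then !(g x) else g x := by
  induction l with
  | nil => intro g x; simp [walk]
  | cons a t ih =>
    intro g x
    show walk (flp g a) t x = _
    rw [ih]
    by_cases hax : x = a
    · subst hax
      rw [flp_apply_self, List.count_cons_self]
      rcases Nat.even_or_odd (t.count x) with h | h
      · rw [Nat.even_iff] at h
        simp [h, Nat.add_mod]
      · rw [Nat.odd_iff] at h
        simp [h, Nat.add_mod]
    · rw [flp_apply_ne _ hax, List.count_cons_of_ne (Ne.symm hax)]

lemma walk_perm {L : ℕ} (g : Fin L → Bool) {l l' : List (Fin L)} (h : l.Perm l') :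
    walk g l = walk g l' := by
  funext x
  rw [walk_apply, walk_apply, h.count_eq]

/-- Key rerouting lemma: given no RSE anywhere, any non-accessible path of distinct
flips from `g` to a peak `p₀` can be replaced by a permuted path with a strictly
larger total fitness sum. -/
lemma reroute {L : ℕ} (f : (Fin L → Bool) → ℝ)
    (hne : ∀ (g : Fin L → Bool) (i : Fin L), f (flp g i) ≠ f g)
    (hcon : ∀ (g : Fin L → Bool) (i j : Fin L), i ≠ j → ¬ RSE f g i j)
    (p₀ : Fin L → Bool) (hpeak : Peak f p₀) :
    ∀ (l : List (Fin L)) (g : Fin L → Bool), l.Nodup → walk g l = p₀ →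
      ¬ Accessible f g l →
      ∃ l', l'.Perm l ∧ walk g l' = p₀ ∧ pathSum f g l < pathSum f g l' := by
  intro l
  induction l with
  | nil => intro g _ _ hacc; exact absurd trivial hacc
  | cons i t ih =>
    intro g hnd hwalk hacc
    by_cases hT : Accessible f (flp g i) t
    · -- the first step must be the failing one
      have h1 : ¬ f g < f (flp g i) := fun h1 => hacc ⟨h1, hT⟩
      have h1' : f (flp g i) < f g := lt_of_le_of_ne (not_lt.mp h1) (hne g i)
      cases t with
      | nil =>
        -- then flp g i = p₀ is a peak, contradicting h1'
        have hp : flp g i = p₀ := hwalk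
        have := hpeak i
        rw [← hp, flp_flp_self] at this
        linarith
      | cons j t'' =>
        -- valley at v = flp g i: reroute through the diagonal
        have hij : i ≠ j := fun h => (List.nodup_cons.mp hnd).1 (h ▸ (List.mem_cons_self : j ∈ j :: t''))
        set v := flp g i with hv
        set b := flp (flp g i) j with hb
        set c := flp g j with hc
        have h2 : f v < f b := hT.1
        have hcb : flp c i = b := by rw [hc, hb, flp_comm g hij]
        have key : f v < f c := by
          by_contra hle
          have hle' : f c ≤ f v := not_lt.mp hle
          refine hcon v i j hij ⟨?_, ?_⟩
          · -- SignFlip f v i j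
            unfold SignFlip
            rw [flp_flp_self]
            rw [show flp (flp v j) i = c by rw [show flp v j = b from rfl, ← hcb, flp_flp_self]]
            intro hiff
            have : f b < f c := hiff.mp h1'
            linarith
          · -- SignFlip f v j i
            unfold SignFlip
            rw [flp_flp_self]
            rw [show flp v j = b from rfl]
            rw [show flp g j = c from rfl]
            intro hiff
            have : f g < f c := hiff.mp h2
            linarith
        refine ⟨j :: i :: t'', List.Perm.swap i j t'', ?_, ?_⟩
        · show walk (flp (flp g j) i) t'' = p₀
          rw [← flp_comm g hij]
          exact hwalk
        · show pathSum f g (i :: j :: t'') < pathSum f g (j :: i :: t'')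
          show f g + pathSum f v (j :: t'') < f g + pathSum f c (i :: t'')
          show f g + (f v + pathSum f b t'') < f g + (f c + pathSum f (flp c i) t'')
          rw [hcb]
          linarith
    · obtain ⟨t', hperm, hwalk', hlt⟩ := ih (flp g i) (List.nodup_cons.mp hnd).2 hwalk hT
      refine ⟨i :: t', hperm.cons i, hwalk', ?_⟩
      show f g + pathSum f (flp g i) t < f g + pathSum f (flp g i) t'
      linarith

end Stmt5Aux

open Stmt5Aux in
/-- if some genotype has no direct accessible path to any peak of the
landscape, then the landscape contains an RSE motif. -/
theorem stmt_5 (L : ℕ) (f : (Fin L → Bool) → ℝ)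
    (hne : ∀ (g : Fin L → Bool) (i : Fin L), f (flp g i) ≠ f g)
    (hblocked : ∃ g : Fin L → Bool, ∀ p : Fin L → Bool, Peak f p →
      ¬ ∃ l : List (Fin L), l.length = hamming g p ∧ walk g l = p ∧ Accessible f g l) :
    ∃ (g : Fin L → Bool) (i j : Fin L), i ≠ j ∧ RSE f g i j := by
  by_contra hcon
  push_neg at hcon
  obtain ⟨g, hg⟩ := hblocked
  -- a global maximum is a peak
  obtain ⟨p₀, -, hp₀⟩ := Finset.exists_max_image (Finset.univ : Finset (Fin L → Bool)) f
    ⟨fun _ => false, Finset.mem_univ _⟩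
  have hpeak : Peak f p₀ := fun i => lt_of_le_of_ne (hp₀ _ (Finset.mem_univ _)) (hne p₀ i)
  -- the canonical direct path from g to p₀
  set l₀ := (Finset.univ.filter (fun x => g x ≠ p₀ x)).toList with hl₀
  have hnd₀ : l₀.Nodup := Finset.nodup_toList _
  have hmem₀ : ∀ x, x ∈ l₀ ↔ g x ≠ p₀ x := by
    intro x; rw [hl₀, Finset.mem_toList, Finset.mem_filter]
    simp
  have hlen₀ : l₀.length = hamming g p₀ := Finset.length_toList _
  have hwalk₀ : walk g l₀ = p₀ := by
    funext x
    rw [walk_apply]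
    by_cases hx : g x = p₀ x
    · have hnx : x ∉ l₀ := fun h => (hmem₀ x).mp h hx
      rw [List.count_eq_zero_of_not_mem hnx]
      simpa using hx
    · rw [List.count_eq_one_of_mem hnd₀ ((hmem₀ x).mpr hx)]
      revert hx
      cases g x <;> cases p₀ x <;> simp
  -- maximize pathSum over all permutations of l₀
  have hTne : l₀ ∈ l₀.permutations.toFinset := by
    rw [List.mem_toFinset, List.mem_permutations]
  obtain ⟨l, hlT, hmax⟩ := Finset.exists_max_image l₀.permutations.toFinset (pathSum f g)
    ⟨l₀, hTne⟩
  have hlperm : l.Perm l₀ := List.mem_permutations.mp (List.mem_toFinset.mp hlT)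
  have hwalk : walk g l = p₀ := (walk_perm g hlperm).trans hwalk₀
  have hacc : ¬ Accessible f g l := fun h =>
    hg p₀ hpeak ⟨l, hlperm.length_eq.trans hlen₀, hwalk, h⟩
  obtain ⟨l', hperm', hwalk', hlt⟩ :=
    reroute f hne hcon p₀ hpeak l g (hlperm.nodup_iff.mpr hnd₀) hwalk hacc
  have hl'T : l' ∈ l₀.permutations.toFinset := by
    rw [List.mem_toFinset, List.mem_permutations]
    exact hperm'.trans hlperm
  exact absurd (hmax l' hl'T) (not_le.mpr hlt)
end

section
/- Consider a finite fitness landscape in which every square motif is classified exactly one of: magnitude epistasis (ME), simple sign epistasis (SSE), or reciprocal sign epistasis (RSE), with fractions φ_m, φ_ss, φ_rs summing to 1. If a square motif is drawn uniformly at random and then a uniformly random vertex g of that motif and a uniformly random one of its two mutations i is examined, then: (a) the probability that g is the fitness minimum of the motif (both mutations beneficial from g) equals (1 + φ_rs)/4; and (b) the probability that mutation i is beneficial at g and deleterious after the other mutation of the motif equals (φ_ss + 2φ_rs)/4. -/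
open Finset

/-- Flip one of the two coordinates of a vertex of a square motif
(`i = false`: first mutation, `i = true`: second mutation). -/
def mflip (v : Bool × Bool) (i : Bool) : Bool × Bool :=
  if i then (v.1, !v.2) else (!v.1, v.2)

/-- Mutation `i` changes the sign of its fitness effect depending on the other mutation
of the square motif `m`. -/
def Changes (m : Bool × Bool → ℝ) (i : Bool) : Prop :=
  ¬ ((m (false, false) < m (mflip (false, false) i)) ↔
     (m (mflip (false, false) (!i)) < m (mflip (mflip (false, false) (!i)) i)))

/-- Magnitude epistasis: neither mutation changes sign. -/
def MEm (m : Bool × Bool → ℝ) : Prop := ¬ Changes m false ∧ ¬ Changes m true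

/-- Simple sign epistasis: exactly one mutation changes sign. -/
def SSEm (m : Bool × Bool → ℝ) : Prop := Xor' (Changes m false) (Changes m true)

/-- Reciprocal sign epistasis: both mutations change sign. -/
def RSEm (m : Bool × Bool → ℝ) : Prop := Changes m false ∧ Changes m true

open scoped Classical in
/-- Per-motif counts: the number of minima among the four vertices, and the number of
(vertex, mutation) pairs that are beneficial-then-deleterious. -/
lemma key_counts (m : (Bool × Bool) → ℝ) (hne : ∀ v i, m (mflip v i) ≠ m v) :
    ((univ.filter fun v : Bool × Bool =>
        m v < m (mflip v false) ∧ m v < m (mflip v true)).card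
      = if RSEm m then 2 else 1) ∧
    ((univ.filter fun q : (Bool × Bool) × Bool =>
        m q.1 < m (mflip q.1 q.2) ∧
        m (mflip (mflip q.1 (!q.2)) q.2) < m (mflip q.1 (!q.2))).card
      = if RSEm m then 4 else if SSEm m then 2 else 0) := by
  have cF : Changes m false ↔
      ¬ ((m (false,false) < m (true,false)) ↔ (m (false,true) < m (true,true))) := Iff.rfl
  have cT : Changes m true ↔
      ¬ ((m (false,false) < m (false,true)) ↔ (m (true,false) < m (true,true))) := Iff.rfl
  have e1 : m (true,false) ≠ m (false,false) := hne (false,false) false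
  have e2 : m (false,true) ≠ m (false,false) := hne (false,false) true
  have e3 : m (true,true) ≠ m (false,true) := hne (false,true) false
  have e4 : m (true,true) ≠ m (true,false) := hne (true,false) true
  rcases e1.lt_or_gt with h1 | h1 <;>
  rcases e2.lt_or_gt with h2 | h2 <;>
  rcases e3.lt_or_gt with h3 | h3 <;>
  rcases e4.lt_or_gt with h4 | h4 <;>
  · constructor <;>
    · rw [Finset.card_filter]
      simp only [Fintype.sum_prod_type, Fintype.sum_bool, RSEm, SSEm, MEm, cF, cT, Xor', Xor]
      norm_num [mflip, h1, h2, h3, h4, asymm h1, asymm h2, asymm h3, asymm h4]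
      all_goals linarith

open scoped Classical in
/-- combinatorial Theorem 3: drawing a uniformly random square motif from a
finite collection, then a uniformly random vertex `g` and a uniformly random mutation `i`,
(a) the probability that `g` is the fitness minimum of the motif is `(1 + φ_rs)/4`;
(b) the probability that mutation `i` is beneficial at `g` and deleterious after the other
mutation is `(φ_ss + 2φ_rs)/4`.  Here `φ_m, φ_ss, φ_rs` are the fractions of ME, SSE and
RSE motifs, which sum to 1. -/
theorem stmt_8 {ι : Type*} [Fintype ι] [Nonempty ι] (F : ι → (Bool × Bool) → ℝ)
    (hne : ∀ (k : ι) (v : Bool × Bool) (i : Bool), F k (mflip v i) ≠ F k v)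
    (φm φss φrs : ℝ)
    (hφm : φm = (univ.filter fun k => MEm (F k)).card / (Fintype.card ι : ℝ))
    (hφss : φss = (univ.filter fun k => SSEm (F k)).card / (Fintype.card ι : ℝ))
    (hφrs : φrs = (univ.filter fun k => RSEm (F k)).card / (Fintype.card ι : ℝ))
    (hsum : φm + φss + φrs = 1) :
    ((univ.filter fun p : ι × Bool × Bool =>
          F p.1 p.2 < F p.1 (mflip p.2 false) ∧ F p.1 p.2 < F p.1 (mflip p.2 true)).card : ℝ)
        / (4 * Fintype.card ι) = (1 + φrs) / 4 ∧
    ((univ.filter fun q : ι × (Bool × Bool) × Bool =>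
          F q.1 q.2.1 < F q.1 (mflip q.2.1 q.2.2) ∧
          F q.1 (mflip (mflip q.2.1 (!q.2.2)) q.2.2) < F q.1 (mflip q.2.1 (!q.2.2))).card : ℝ)
        / (8 * Fintype.card ι) = (φss + 2 * φrs) / 4 := by
  have hN : (0:ℝ) < Fintype.card ι := by
    have := Fintype.card_pos (α := ι); positivity
  have ha : ((univ.filter fun p : ι × Bool × Bool =>
          F p.1 p.2 < F p.1 (mflip p.2 false) ∧ F p.1 p.2 < F p.1 (mflip p.2 true)).card : ℕ)
      = ∑ k : ι, (if RSEm (F k) then 2 else 1) := by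
    rw [Finset.card_filter, Fintype.sum_prod_type]
    refine Finset.sum_congr rfl fun k _ => ?_
    rw [← Finset.card_filter]
    exact (key_counts (F k) (hne k)).1
  have hb : ((univ.filter fun q : ι × (Bool × Bool) × Bool =>
          F q.1 q.2.1 < F q.1 (mflip q.2.1 q.2.2) ∧
          F q.1 (mflip (mflip q.2.1 (!q.2.2)) q.2.2) < F q.1 (mflip q.2.1 (!q.2.2))).card : ℕ)
      = ∑ k : ι, (if RSEm (F k) then 4 else if SSEm (F k) then 2 else 0) := by
    rw [Finset.card_filter, Fintype.sum_prod_type]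
    refine Finset.sum_congr rfl fun k _ => ?_
    rw [← Finset.card_filter]
    exact (key_counts (F k) (hne k)).2
  have sum_a : ∑ k : ι, (if RSEm (F k) then (2:ℕ) else 1)
      = (univ.filter fun k => RSEm (F k)).card + Fintype.card ι := by
    rw [Finset.sum_congr rfl (fun k _ =>
      show (if RSEm (F k) then (2:ℕ) else 1) = (if RSEm (F k) then 1 else 0) + 1 by
        split <;> rfl), Finset.sum_add_distrib, ← Finset.card_filter]
    simp [Finset.card_univ]
  have sum_b : ∑ k : ι, (if RSEm (F k) then (4:ℕ) else if SSEm (F k) then 2 else 0)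
      = 4 * (univ.filter fun k => RSEm (F k)).card
        + 2 * (univ.filter fun k => SSEm (F k)).card := by
    rw [Finset.sum_congr rfl (fun k _ =>
      show (if RSEm (F k) then (4:ℕ) else if SSEm (F k) then 2 else 0)
          = 4 * (if RSEm (F k) then 1 else 0) + 2 * (if SSEm (F k) then 1 else 0) by
        by_cases hr : RSEm (F k)
        · have hs : ¬ SSEm (F k) := by
            simp only [SSEm, RSEm, Xor', Xor] at hr ⊢; tauto
          simp [hr, hs]
        · by_cases hs : SSEm (F k) <;> simp [hr, hs]),
      Finset.sum_add_distrib, ← Finset.mul_sum, ← Finset.mul_sum,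
      ← Finset.card_filter, ← Finset.card_filter]
  constructor
  · rw [ha, sum_a, hφrs]
    push_cast
    field_simp
    ring
  · rw [hb, sum_b, hφss, hφrs]
    push_cast
    field_simp
    ring
end

section
/- In the classical Rough Mount Fuji model with additive effect s > 0 per locus and i.i.d. Uniform[0, σ] random genotype contributions, the expected fraction of reciprocal sign epistasis motifs is: 0 if s/σ ≥ 1; (2/3)(1 − s/σ)³ if 1/2 < s/σ < 1; and (2/3)(1 − s/σ)³ − (1/3)(1 − 2s/σ)³ = 1/3 − 2(s/σ)²(1 − s/σ) if s/σ ≤ 1/2. -/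
open MeasureTheory ProbabilityTheory Set

namespace Stmt12Aux


noncomputable def cl (σ x : ℝ) : ℝ := max 0 (min x σ)
lemma cl_nonneg (σ x : ℝ) : 0 ≤ cl σ x := le_max_left _ _
lemma cl_le {σ : ℝ} (hσ : 0 ≤ σ) (x : ℝ) : cl σ x ≤ σ := max_le hσ (min_le_right _ _)
lemma cl_of_nonpos {σ x : ℝ} (hx : x ≤ 0) : cl σ x = 0 :=
  max_eq_left (le_trans (min_le_left _ _) hx)
lemma cl_of_mem {σ x : ℝ} (h0 : 0 ≤ x) (h1 : x ≤ σ) : cl σ x = x := by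
  rw [cl, min_eq_left h1, max_eq_right h0]
lemma cl_of_ge {σ x : ℝ} (hσ : 0 ≤ σ) (h : σ ≤ x) : cl σ x = σ := by
  rw [cl, min_eq_right h, max_eq_right hσ]
lemma cl_sub {σ : ℝ} (hσ : 0 ≤ σ) (x : ℝ) : σ - cl σ (σ - x) = cl σ x := by
  rcases le_total x 0 with h | h
  · rw [cl_of_nonpos h, cl_of_ge hσ (by linarith), sub_self]
  · rcases le_total x σ with h2 | h2
    · rw [cl_of_mem h h2, cl_of_mem (by linarith) (by linarith)]; ring
    · rw [cl_of_ge hσ h2, cl_of_nonpos (by linarith), sub_zero]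
lemma continuous_cl (σ : ℝ) : Continuous (cl σ) :=
  continuous_const.max (continuous_id.min continuous_const)

lemma hasDerivAt_poly (a0 a1 a2 a3 x : ℝ) :
    HasDerivAt (fun y => a0 * y + a1 / 2 * y ^ 2 + a2 / 3 * y ^ 3 + a3 / 4 * y ^ 4)
      (a0 + a1 * x + a2 * x ^ 2 + a3 * x ^ 3) x := by
  have h := (((hasDerivAt_id x).const_mul a0).add ((hasDerivAt_pow 2 x).const_mul (a1 / 2))).add
    (((hasDerivAt_pow 3 x).const_mul (a2 / 3)).add ((hasDerivAt_pow 4 x).const_mul (a3 / 4)))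
  convert h using 1
  · rfl
  · rfl
  · funext y; simp [id]; ring
  · norm_num; ring

lemma cont_poly (a0 a1 a2 a3 : ℝ) :
    Continuous fun x : ℝ => a0 + a1 * x + a2 * x ^ 2 + a3 * x ^ 3 := by fun_prop

lemma integral_poly3 (a0 a1 a2 a3 p q : ℝ) :
    (∫ x in p..q, (a0 + a1 * x + a2 * x ^ 2 + a3 * x ^ 3)) =
      (a0 * q + a1 / 2 * q ^ 2 + a2 / 3 * q ^ 3 + a3 / 4 * q ^ 4)
      - (a0 * p + a1 / 2 * p ^ 2 + a2 / 3 * p ^ 3 + a3 / 4 * p ^ 4) :=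
  intervalIntegral.integral_eq_sub_of_hasDerivAt
    (fun x _ => hasDerivAt_poly a0 a1 a2 a3 x)
    ((cont_poly a0 a1 a2 a3).intervalIntegrable p q)

/-! ### K1 : the equal-sign double integral -/

noncomputable def h1 (σ s m : ℝ) : ℝ := cl σ (m + s) * cl σ (m - s)

lemma continuous_h1 (σ s : ℝ) : Continuous (h1 σ s) :=
  ((continuous_cl σ).comp (by fun_prop : Continuous fun m : ℝ => m + s)).mul
    ((continuous_cl σ).comp (by fun_prop : Continuous fun m : ℝ => m - s))

lemma continuous_h1min (σ s b : ℝ) : Continuous fun c => h1 σ s (min b c) :=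
  (continuous_h1 σ s).comp (continuous_const.min continuous_id)

lemma h1_of_le {σ s m : ℝ} (hm : m ≤ s) : h1 σ s m = 0 := by
  rw [h1, cl_of_nonpos (show m - s ≤ 0 by linarith), mul_zero]

lemma h1_mid {σ s m : ℝ} (hs : 0 ≤ s) (hm : s ≤ m) (h2 : m + s ≤ σ) :
    h1 σ s m = (m + s) * (m - s) := by
  rw [h1, cl_of_mem (by linarith) h2, cl_of_mem (by linarith) (by linarith)]

lemma h1_top {σ s m : ℝ} (hσ : 0 ≤ σ) (hm : s ≤ m) (h1' : σ ≤ m + s) (h2 : m - s ≤ σ) :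
    h1 σ s m = σ * (m - s) := by
  rw [h1, cl_of_ge hσ h1', cl_of_mem (by linarith) h2]

lemma K1_inner {σ s b : ℝ} (hb0 : 0 ≤ b) (hbσ : b ≤ σ) :
    (∫ c in (0:ℝ)..σ, h1 σ s (min b c)) =
      (∫ c in (0:ℝ)..b, h1 σ s c) + (σ - b) * h1 σ s b := by
  have i1 : IntervalIntegrable (fun c => h1 σ s (min b c)) volume 0 b :=
    (continuous_h1min σ s b).intervalIntegrable _ _
  have i2 : IntervalIntegrable (fun c => h1 σ s (min b c)) volume b σ :=
    (continuous_h1min σ s b).intervalIntegrable _ _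
  rw [← intervalIntegral.integral_add_adjacent_intervals i1 i2]
  congr 1
  · apply intervalIntegral.integral_congr
    intro c hc
    rw [uIcc_of_le hb0] at hc
    simp [min_eq_right hc.2]
  · rw [intervalIntegral.integral_congr (g := fun _ => h1 σ s b)
      (fun c hc => by rw [uIcc_of_le hbσ] at hc; simp [min_eq_left hc.1]),
      intervalIntegral.integral_const, smul_eq_mul]

lemma K1_high {s σ : ℝ} (hσ : 0 < σ) (hσs : σ ≤ s) :
    (∫ b in (0:ℝ)..σ, ∫ c in (0:ℝ)..σ, h1 σ s (min b c)) = 0 := by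
  have : ∀ b : ℝ, (∫ c in (0:ℝ)..σ, h1 σ s (min b c)) = 0 := by
    intro b
    rw [intervalIntegral.integral_congr (g := fun _ => (0:ℝ))
      (fun c hc => by
        rw [uIcc_of_le hσ.le] at hc
        exact h1_of_le (le_trans (min_le_right _ _) (le_trans hc.2 hσs)))]
    simp
  simp [this]

lemma K1_mid {s σ : ℝ} (hs : 0 < s) (hσ : 0 < σ) (h2s : σ ≤ 2 * s) (hsσ : s ≤ σ) :
    (∫ b in (0:ℝ)..σ, ∫ c in (0:ℝ)..σ, h1 σ s (min b c)) = σ * (σ - s) ^ 3 / 3 := by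
  have E1 : EqOn (fun b => ∫ c in (0:ℝ)..σ, h1 σ s (min b c)) (fun _ => (0:ℝ)) (uIcc 0 s) := by
    intro b hb
    rw [uIcc_of_le hs.le] at hb
    simp only
    rw [K1_inner hb.1 (le_trans hb.2 hsσ),
      intervalIntegral.integral_congr (g := fun _ => (0:ℝ))
        (fun c hc => by
          rw [uIcc_of_le hb.1] at hc
          exact h1_of_le (le_trans hc.2 hb.2)),
      h1_of_le hb.2]
    simp
  have E2 : EqOn (fun b => ∫ c in (0:ℝ)..σ, h1 σ s (min b c))
      (fun b => (σ * s ^ 2 / 2 - σ ^ 2 * s) + σ ^ 2 * b + (-(σ / 2)) * b ^ 2 + 0 * b ^ 3)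
      (uIcc s σ) := by
    intro b hb
    rw [uIcc_of_le hsσ] at hb
    obtain ⟨hb1, hb2⟩ := hb
    simp only
    have i1 : IntervalIntegrable (h1 σ s) volume 0 s :=
      (continuous_h1 σ s).intervalIntegrable _ _
    have i2 : IntervalIntegrable (h1 σ s) volume s b :=
      (continuous_h1 σ s).intervalIntegrable _ _
    have hz : (∫ c in (0:ℝ)..s, h1 σ s c) = 0 := by
      rw [intervalIntegral.integral_congr (g := fun _ => (0:ℝ))
        (fun c hc => by rw [uIcc_of_le hs.le] at hc; exact h1_of_le hc.2)]
      simp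
    rw [K1_inner (le_trans hs.le hb1) hb2,
      ← intervalIntegral.integral_add_adjacent_intervals i1 i2, hz, zero_add,
      intervalIntegral.integral_congr
        (g := fun c => (-(σ * s)) + σ * c + 0 * c ^ 2 + 0 * c ^ 3)
        (fun c hc => by
          rw [uIcc_of_le hb1] at hc
          rw [h1_top hσ.le hc.1 (by linarith [hc.1]) (by nlinarith [hc.2])]
          ring),
      integral_poly3, h1_top hσ.le hb1 (by linarith) (by linarith)]
    ring
  have i1 : IntervalIntegrable (fun b => ∫ c in (0:ℝ)..σ, h1 σ s (min b c)) volume 0 s :=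
    (continuous_const.continuousOn.congr E1).intervalIntegrable
  have i2 : IntervalIntegrable (fun b => ∫ c in (0:ℝ)..σ, h1 σ s (min b c)) volume s σ :=
    (((cont_poly _ _ _ _).continuousOn).congr E2).intervalIntegrable
  rw [← intervalIntegral.integral_add_adjacent_intervals i1 i2,
    intervalIntegral.integral_congr E1, intervalIntegral.integral_congr E2,
    intervalIntegral.integral_zero, integral_poly3]
  ring

lemma K1_low {s σ : ℝ} (hs : 0 < s) (hσ : 0 < σ) (h2s : 2 * s ≤ σ) :
    (∫ b in (0:ℝ)..σ, ∫ c in (0:ℝ)..σ, h1 σ s (min b c)) =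
      σ ^ 4 / 6 - s ^ 2 * σ ^ 2 + s ^ 3 * σ := by
  have hsσ : s ≤ σ := by linarith
  have hss : s ≤ σ - s := by linarith
  have E1 : EqOn (fun b => ∫ c in (0:ℝ)..σ, h1 σ s (min b c)) (fun _ => (0:ℝ)) (uIcc 0 s) := by
    intro b hb
    rw [uIcc_of_le hs.le] at hb
    simp only
    rw [K1_inner hb.1 (le_trans hb.2 hsσ),
      intervalIntegral.integral_congr (g := fun _ => (0:ℝ))
        (fun c hc => by
          rw [uIcc_of_le hb.1] at hc
          exact h1_of_le (le_trans hc.2 hb.2)),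
      h1_of_le hb.2]
    simp
  have E2 : EqOn (fun b => ∫ c in (0:ℝ)..σ, h1 σ s (min b c))
      (fun b => (2 * s ^ 3 / 3 - σ * s ^ 2) + 0 * b + σ * b ^ 2 + (-(2 / 3)) * b ^ 3)
      (uIcc s (σ - s)) := by
    intro b hb
    rw [uIcc_of_le hss] at hb
    obtain ⟨hb1, hb2⟩ := hb
    simp only
    have i1 : IntervalIntegrable (h1 σ s) volume 0 s :=
      (continuous_h1 σ s).intervalIntegrable _ _
    have i2 : IntervalIntegrable (h1 σ s) volume s b :=
      (continuous_h1 σ s).intervalIntegrable _ _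
    have hz : (∫ c in (0:ℝ)..s, h1 σ s c) = 0 := by
      rw [intervalIntegral.integral_congr (g := fun _ => (0:ℝ))
        (fun c hc => by rw [uIcc_of_le hs.le] at hc; exact h1_of_le hc.2)]
      simp
    rw [K1_inner (le_trans hs.le hb1) (by linarith),
      ← intervalIntegral.integral_add_adjacent_intervals i1 i2, hz, zero_add,
      intervalIntegral.integral_congr
        (g := fun c => (-(s ^ 2)) + 0 * c + 1 * c ^ 2 + 0 * c ^ 3)
        (fun c hc => by
          rw [uIcc_of_le hb1] at hc
          rw [h1_mid hs.le hc.1 (by linarith [hc.2])]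
          ring),
      integral_poly3, h1_mid hs.le hb1 (by linarith)]
    ring
  have E3 : EqOn (fun b => ∫ c in (0:ℝ)..σ, h1 σ s (min b c))
      (fun b => ((4 : ℝ) / 3 * s ^ 3 - 3 / 2 * s ^ 2 * σ - σ ^ 3 / 6) + σ ^ 2 * b
        + (-(σ / 2)) * b ^ 2 + 0 * b ^ 3)
      (uIcc (σ - s) σ) := by
    intro b hb
    rw [uIcc_of_le (by linarith)] at hb
    obtain ⟨hb1, hb2⟩ := hb
    simp only
    have i1 : IntervalIntegrable (h1 σ s) volume 0 s :=
      (continuous_h1 σ s).intervalIntegrable _ _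
    have i2 : IntervalIntegrable (h1 σ s) volume s (σ - s) :=
      (continuous_h1 σ s).intervalIntegrable _ _
    have i3 : IntervalIntegrable (h1 σ s) volume (σ - s) b :=
      (continuous_h1 σ s).intervalIntegrable _ _
    have hz : (∫ c in (0:ℝ)..s, h1 σ s c) = 0 := by
      rw [intervalIntegral.integral_congr (g := fun _ => (0:ℝ))
        (fun c hc => by rw [uIcc_of_le hs.le] at hc; exact h1_of_le hc.2)]
      simp
    have hq : (∫ c in s..(σ - s), h1 σ s c) =
        ((-(s ^ 2)) * (σ - s) + 0 / 2 * (σ - s) ^ 2 + 1 / 3 * (σ - s) ^ 3 + 0 / 4 * (σ - s) ^ 4)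
        - ((-(s ^ 2)) * s + 0 / 2 * s ^ 2 + 1 / 3 * s ^ 3 + 0 / 4 * s ^ 4) := by
      rw [intervalIntegral.integral_congr
        (g := fun c => (-(s ^ 2)) + 0 * c + 1 * c ^ 2 + 0 * c ^ 3)
        (fun c hc => by
          rw [uIcc_of_le hss] at hc
          rw [h1_mid hs.le hc.1 (by linarith [hc.2])]
          ring),
        integral_poly3]
    rw [K1_inner (by linarith) hb2,
      ← intervalIntegral.integral_add_adjacent_intervals (i1.trans i2) i3,
      ← intervalIntegral.integral_add_adjacent_intervals i1 i2, hz, zero_add, hq,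
      intervalIntegral.integral_congr
        (g := fun c => (-(σ * s)) + σ * c + 0 * c ^ 2 + 0 * c ^ 3)
        (fun c hc => by
          rw [uIcc_of_le hb1] at hc
          rw [h1_top hσ.le (by linarith [hc.1]) (by linarith [hc.1]) (by linarith [hc.2])]
          ring),
      integral_poly3, h1_top hσ.le (by linarith) (by linarith) (by linarith)]
    ring
  have i1 : IntervalIntegrable (fun b => ∫ c in (0:ℝ)..σ, h1 σ s (min b c)) volume 0 s :=
    (continuous_const.continuousOn.congr E1).intervalIntegrable
  have i2 : IntervalIntegrable (fun b => ∫ c in (0:ℝ)..σ, h1 σ s (min b c)) volume s (σ - s) :=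
    (((cont_poly _ _ _ _).continuousOn).congr E2).intervalIntegrable
  have i3 : IntervalIntegrable (fun b => ∫ c in (0:ℝ)..σ, h1 σ s (min b c)) volume (σ - s) σ :=
    (((cont_poly _ _ _ _).continuousOn).congr E3).intervalIntegrable
  rw [← intervalIntegral.integral_add_adjacent_intervals (i1.trans i2) i3,
    ← intervalIntegral.integral_add_adjacent_intervals i1 i2,
    intervalIntegral.integral_congr E1, intervalIntegral.integral_congr E2,
    intervalIntegral.integral_congr E3,
    intervalIntegral.integral_zero, integral_poly3, integral_poly3]
  ring

/-! ### K2 : the mixed-sign double integral -/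

noncomputable def q2 (σ s b c : ℝ) : ℝ := cl σ (min (b + s) (c - s))

lemma continuous_q2 (σ s b : ℝ) : Continuous fun c => q2 σ s b c * q2 σ s b c :=
  (((continuous_cl σ).comp (continuous_const.min (by fun_prop))).mul
    ((continuous_cl σ).comp (continuous_const.min (by fun_prop))))

lemma K2_high {s σ : ℝ} (hσ : 0 < σ) (hσs : σ ≤ s) :
    (∫ b in (0:ℝ)..σ, ∫ c in (0:ℝ)..σ, q2 σ s b c * q2 σ s b c) = 0 := by
  have : ∀ b : ℝ, (∫ c in (0:ℝ)..σ, q2 σ s b c * q2 σ s b c) = 0 := by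
    intro b
    rw [intervalIntegral.integral_congr (g := fun _ => (0:ℝ))
      (fun c hc => by
        rw [uIcc_of_le hσ.le] at hc
        rw [q2, cl_of_nonpos (le_trans (min_le_right _ _) (by linarith [hc.2]))]
        simp)]
    simp
  simp [this]

lemma K2_mid {s σ : ℝ} (hs : 0 < s) (hσ : 0 < σ) (h2s : σ ≤ 2 * s) (hsσ : s ≤ σ) :
    (∫ b in (0:ℝ)..σ, ∫ c in (0:ℝ)..σ, q2 σ s b c * q2 σ s b c) = σ * (σ - s) ^ 3 / 3 := by
  have Einner : EqOn (fun b => ∫ c in (0:ℝ)..σ, q2 σ s b c * q2 σ s b c)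
      (fun _ => (σ - s) ^ 3 / 3) (uIcc 0 σ) := by
    intro b hb
    rw [uIcc_of_le hσ.le] at hb
    simp only
    have i1 : IntervalIntegrable (fun c => q2 σ s b c * q2 σ s b c) volume 0 s :=
      (continuous_q2 σ s b).intervalIntegrable _ _
    have i2 : IntervalIntegrable (fun c => q2 σ s b c * q2 σ s b c) volume s σ :=
      (continuous_q2 σ s b).intervalIntegrable _ _
    have hz : (∫ c in (0:ℝ)..s, q2 σ s b c * q2 σ s b c) = 0 := by
      rw [intervalIntegral.integral_congr (g := fun _ => (0:ℝ))
        (fun c hc => by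
          rw [uIcc_of_le hs.le] at hc
          rw [q2, cl_of_nonpos (le_trans (min_le_right _ _) (by linarith [hc.2]))]
          simp)]
      simp
    rw [← intervalIntegral.integral_add_adjacent_intervals i1 i2, hz, zero_add,
      intervalIntegral.integral_congr
        (g := fun c => s ^ 2 + (-(2 * s)) * c + 1 * c ^ 2 + 0 * c ^ 3)
        (fun c hc => by
          rw [uIcc_of_le hsσ] at hc
          rw [q2, min_eq_right (by linarith [hc.2, hb.1]),
            cl_of_mem (by linarith [hc.1]) (by linarith [hc.2])]
          ring),
      integral_poly3]
    ring
  rw [intervalIntegral.integral_congr Einner, intervalIntegral.integral_const, smul_eq_mul]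
  ring

lemma K2_low {s σ : ℝ} (hs : 0 < s) (hσ : 0 < σ) (h2s : 2 * s ≤ σ) :
    (∫ b in (0:ℝ)..σ, ∫ c in (0:ℝ)..σ, q2 σ s b c * q2 σ s b c) =
      σ ^ 4 / 6 - s ^ 2 * σ ^ 2 + s ^ 3 * σ := by
  have hsσ : s ≤ σ := by linarith
  have E1 : EqOn (fun b => ∫ c in (0:ℝ)..σ, q2 σ s b c * q2 σ s b c)
      (fun b => (σ * s ^ 2 - 5 * s ^ 3 / 3) + (2 * s * σ - 4 * s ^ 2) * b
        + (σ - 3 * s) * b ^ 2 + (-(2 / 3)) * b ^ 3) (uIcc 0 (σ - 2 * s)) := by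
    intro b hb
    rw [uIcc_of_le (by linarith)] at hb
    obtain ⟨hb1, hb2⟩ := hb
    simp only
    have i1 : IntervalIntegrable (fun c => q2 σ s b c * q2 σ s b c) volume 0 s :=
      (continuous_q2 σ s b).intervalIntegrable _ _
    have i2 : IntervalIntegrable (fun c => q2 σ s b c * q2 σ s b c) volume s (b + 2 * s) :=
      (continuous_q2 σ s b).intervalIntegrable _ _
    have i3 : IntervalIntegrable (fun c => q2 σ s b c * q2 σ s b c) volume (b + 2 * s) σ :=
      (continuous_q2 σ s b).intervalIntegrable _ _
    have hz : (∫ c in (0:ℝ)..s, q2 σ s b c * q2 σ s b c) = 0 := by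
      rw [intervalIntegral.integral_congr (g := fun _ => (0:ℝ))
        (fun c hc => by
          rw [uIcc_of_le hs.le] at hc
          rw [q2, cl_of_nonpos (le_trans (min_le_right _ _) (by linarith [hc.2]))]
          simp)]
      simp
    have hq : (∫ c in s..(b + 2 * s), q2 σ s b c * q2 σ s b c) =
        (s ^ 2 * (b + 2 * s) + (-(2 * s)) / 2 * (b + 2 * s) ^ 2 + 1 / 3 * (b + 2 * s) ^ 3
          + 0 / 4 * (b + 2 * s) ^ 4)
        - (s ^ 2 * s + (-(2 * s)) / 2 * s ^ 2 + 1 / 3 * s ^ 3 + 0 / 4 * s ^ 4) := by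
      rw [intervalIntegral.integral_congr
        (g := fun c => s ^ 2 + (-(2 * s)) * c + 1 * c ^ 2 + 0 * c ^ 3)
        (fun c hc => by
          rw [uIcc_of_le (by linarith)] at hc
          rw [q2, min_eq_right (by linarith [hc.2]),
            cl_of_mem (by linarith [hc.1]) (by linarith [hc.2, hb2])]
          ring),
        integral_poly3]
    have hc3 : (∫ c in (b + 2 * s)..σ, q2 σ s b c * q2 σ s b c) =
        (σ - (b + 2 * s)) * ((b + s) * (b + s)) := by
      rw [intervalIntegral.integral_congr (g := fun _ => (b + s) * (b + s))
        (fun c hc => by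
          rw [uIcc_of_le (by linarith)] at hc
          rw [q2, min_eq_left (by linarith [hc.1]),
            cl_of_mem (by linarith) (by linarith)]),
        intervalIntegral.integral_const, smul_eq_mul]
    rw [← intervalIntegral.integral_add_adjacent_intervals (i1.trans i2) i3,
      ← intervalIntegral.integral_add_adjacent_intervals i1 i2, hz, zero_add, hq, hc3]
    ring
  have E2 : EqOn (fun b => ∫ c in (0:ℝ)..σ, q2 σ s b c * q2 σ s b c)
      (fun _ => (σ - s) ^ 3 / 3) (uIcc (σ - 2 * s) σ) := by
    intro b hb
    rw [uIcc_of_le (by linarith)] at hb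
    obtain ⟨hb1, hb2⟩ := hb
    simp only
    have i1 : IntervalIntegrable (fun c => q2 σ s b c * q2 σ s b c) volume 0 s :=
      (continuous_q2 σ s b).intervalIntegrable _ _
    have i2 : IntervalIntegrable (fun c => q2 σ s b c * q2 σ s b c) volume s σ :=
      (continuous_q2 σ s b).intervalIntegrable _ _
    have hz : (∫ c in (0:ℝ)..s, q2 σ s b c * q2 σ s b c) = 0 := by
      rw [intervalIntegral.integral_congr (g := fun _ => (0:ℝ))
        (fun c hc => by
          rw [uIcc_of_le hs.le] at hc
          rw [q2, cl_of_nonpos (le_trans (min_le_right _ _) (by linarith [hc.2]))]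
          simp)]
      simp
    rw [← intervalIntegral.integral_add_adjacent_intervals i1 i2, hz, zero_add,
      intervalIntegral.integral_congr
        (g := fun c => s ^ 2 + (-(2 * s)) * c + 1 * c ^ 2 + 0 * c ^ 3)
        (fun c hc => by
          rw [uIcc_of_le hsσ] at hc
          rw [q2, min_eq_right (by linarith [hc.2, hb1]),
            cl_of_mem (by linarith [hc.1]) (by linarith [hc.2])]
          ring),
      integral_poly3]
    ring
  have i1 : IntervalIntegrable (fun b => ∫ c in (0:ℝ)..σ, q2 σ s b c * q2 σ s b c)
      volume 0 (σ - 2 * s) :=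
    (((cont_poly _ _ _ _).continuousOn).congr E1).intervalIntegrable
  have i2 : IntervalIntegrable (fun b => ∫ c in (0:ℝ)..σ, q2 σ s b c * q2 σ s b c)
      volume (σ - 2 * s) σ :=
    (continuous_const.continuousOn.congr E2).intervalIntegrable
  rw [← intervalIntegral.integral_add_adjacent_intervals i1 i2,
    intervalIntegral.integral_congr E1, intervalIntegral.integral_congr E2,
    integral_poly3, intervalIntegral.integral_const, smul_eq_mul]
  ring

/-! ### symmetry infrastructure -/

lemma intOnProd {σ : ℝ} {F : ℝ × ℝ → ℝ} (hF : Continuous F) :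
    IntegrableOn F (Ioc (0:ℝ) σ ×ˢ Ioc (0:ℝ) σ) (volume.prod volume) := by
  rw [← Measure.volume_eq_prod]
  exact (hF.continuousOn.integrableOn_compact (isCompact_Icc.prod isCompact_Icc)).mono_set
    (prod_mono Ioc_subset_Icc_self Ioc_subset_Icc_self)

lemma swap_lemma {σ : ℝ} (hσ : 0 ≤ σ) {F : ℝ → ℝ → ℝ} (hF : Continuous (Function.uncurry F)) :
    (∫ b in (0:ℝ)..σ, ∫ c in (0:ℝ)..σ, F b c) = ∫ b in (0:ℝ)..σ, ∫ c in (0:ℝ)..σ, F c b := by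
  have h1 : IntegrableOn (fun z : ℝ × ℝ => F z.1 z.2) (Ioc (0:ℝ) σ ×ˢ Ioc (0:ℝ) σ)
      (volume.prod volume) := intOnProd hF
  have h2 : IntegrableOn (fun z : ℝ × ℝ => F z.2 z.1) (Ioc (0:ℝ) σ ×ˢ Ioc (0:ℝ) σ)
      (volume.prod volume) := intOnProd (hF.comp continuous_swap)
  calc (∫ b in (0:ℝ)..σ, ∫ c in (0:ℝ)..σ, F b c)
      = ∫ b in Ioc (0:ℝ) σ, ∫ c in Ioc (0:ℝ) σ, F b c := by
        simp_rw [intervalIntegral.integral_of_le hσ]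
    _ = ∫ z in Ioc (0:ℝ) σ ×ˢ Ioc (0:ℝ) σ, F z.1 z.2 ∂(volume.prod volume) :=
        (setIntegral_prod (fun z => F z.1 z.2) h1).symm
    _ = ∫ z in Ioc (0:ℝ) σ ×ˢ Ioc (0:ℝ) σ, F z.2 z.1 ∂(volume.prod volume) := by
        rw [← Measure.prod_restrict]
        have h := MeasureTheory.integral_prod_swap (μ := volume.restrict (Ioc (0:ℝ) σ))
          (ν := volume.restrict (Ioc (0:ℝ) σ)) (fun z : ℝ × ℝ => F z.2 z.1)
        simpa using h
    _ = ∫ b in Ioc (0:ℝ) σ, ∫ c in Ioc (0:ℝ) σ, F c b :=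
        setIntegral_prod (fun z => F z.2 z.1) h2
    _ = ∫ b in (0:ℝ)..σ, ∫ c in (0:ℝ)..σ, F c b := by
        simp_rw [intervalIntegral.integral_of_le hσ]

lemma double_add {σ : ℝ} (hσ : 0 ≤ σ) {F G : ℝ → ℝ → ℝ} (hF : Continuous (Function.uncurry F))
    (hG : Continuous (Function.uncurry G)) :
    (∫ b in (0:ℝ)..σ, ∫ c in (0:ℝ)..σ, (F b c + G b c)) =
      (∫ b in (0:ℝ)..σ, ∫ c in (0:ℝ)..σ, F b c) + ∫ b in (0:ℝ)..σ, ∫ c in (0:ℝ)..σ, G b c := by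
  have h1 : IntegrableOn (fun z : ℝ × ℝ => F z.1 z.2) (Ioc (0:ℝ) σ ×ˢ Ioc (0:ℝ) σ)
      (volume.prod volume) := intOnProd hF
  have h2 : IntegrableOn (fun z : ℝ × ℝ => G z.1 z.2) (Ioc (0:ℝ) σ ×ˢ Ioc (0:ℝ) σ)
      (volume.prod volume) := intOnProd hG
  calc (∫ b in (0:ℝ)..σ, ∫ c in (0:ℝ)..σ, (F b c + G b c))
      = ∫ z in Ioc (0:ℝ) σ ×ˢ Ioc (0:ℝ) σ, (F z.1 z.2 + G z.1 z.2) ∂(volume.prod volume) := by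
        simp_rw [intervalIntegral.integral_of_le hσ]
        exact (setIntegral_prod (fun z => F z.1 z.2 + G z.1 z.2) (h1.add h2)).symm
    _ = (∫ z in Ioc (0:ℝ) σ ×ˢ Ioc (0:ℝ) σ, F z.1 z.2 ∂(volume.prod volume))
        + ∫ z in Ioc (0:ℝ) σ ×ˢ Ioc (0:ℝ) σ, G z.1 z.2 ∂(volume.prod volume) :=
        integral_add h1 h2
    _ = (∫ b in (0:ℝ)..σ, ∫ c in (0:ℝ)..σ, F b c) + ∫ b in (0:ℝ)..σ, ∫ c in (0:ℝ)..σ, G b c := by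
        rw [setIntegral_prod (fun z => F z.1 z.2) h1, setIntegral_prod (fun z => G z.1 z.2) h2]
        simp_rw [intervalIntegral.integral_of_le hσ]

lemma refl_lemma (σ : ℝ) (F : ℝ → ℝ) :
    (∫ x in (0:ℝ)..σ, F (σ - x)) = ∫ x in (0:ℝ)..σ, F x := by
  rw [intervalIntegral.integral_comp_sub_left F σ, sub_self, sub_zero]

lemma max_sub_sub (a u v : ℝ) : max (a - u) (a - v) = a - min u v := by
  rcases le_total u v with h | h
  · rw [min_eq_left h, max_eq_left (by linarith)]
  · rw [min_eq_right h, max_eq_right (by linarith)]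

noncomputable def Tval (s σ : ℝ) : ℝ :=
  if 1 ≤ s / σ then 0
  else if 1 / 2 < s / σ then 2 / 3 * (1 - s / σ) ^ 3
  else 1 / 3 - 2 * (s / σ) ^ 2 * (1 - s / σ)

lemma coreP {s σ : ℝ} (hs : 0 < s) (hσ : 0 < σ) (χ ξ : ℝ)
    (hχ : χ = s ∨ χ = -s) (hξ : ξ = s ∨ ξ = -s) :
    (∫ b in (0:ℝ)..σ, ∫ c in (0:ℝ)..σ,
      (cl σ (min (b + χ) (c + ξ)) * cl σ (min (b - ξ) (c - χ))
        + (σ - cl σ (max (b + χ) (c + ξ))) * (σ - cl σ (max (b - ξ) (c - χ))))) =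
      σ ^ 4 * Tval s σ := by
  have contG1 : ∀ χ' ξ' : ℝ, Continuous (Function.uncurry fun b c : ℝ =>
      cl σ (min (b + χ') (c + ξ')) * cl σ (min (b - ξ') (c - χ'))) := by
    intro χ' ξ'
    exact (((continuous_cl σ).comp ((continuous_fst.add continuous_const).min
      (continuous_snd.add continuous_const))).mul
      ((continuous_cl σ).comp ((continuous_fst.sub continuous_const).min
      (continuous_snd.sub continuous_const))))
  have contG2 : Continuous (Function.uncurry fun b c : ℝ =>
      (σ - cl σ (max (b + χ) (c + ξ))) * (σ - cl σ (max (b - ξ) (c - χ)))) :=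
    ((continuous_const.sub ((continuous_cl σ).comp ((continuous_fst.add continuous_const).max
      (continuous_snd.add continuous_const)))).mul
     (continuous_const.sub ((continuous_cl σ).comp ((continuous_fst.sub continuous_const).max
      (continuous_snd.sub continuous_const)))))
  rw [double_add hσ.le (contG1 χ ξ) contG2]
  have hrefl : (∫ b in (0:ℝ)..σ, ∫ c in (0:ℝ)..σ,
      (σ - cl σ (max (b + χ) (c + ξ))) * (σ - cl σ (max (b - ξ) (c - χ)))) =
      ∫ b in (0:ℝ)..σ, ∫ c in (0:ℝ)..σ,
        cl σ (min (b + ξ) (c + χ)) * cl σ (min (b - χ) (c - ξ)) := by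
    rw [← refl_lemma σ (fun b => ∫ c in (0:ℝ)..σ,
      (σ - cl σ (max (b + χ) (c + ξ))) * (σ - cl σ (max (b - ξ) (c - χ))))]
    apply intervalIntegral.integral_congr
    intro b _
    simp only
    rw [← refl_lemma σ (fun c =>
      (σ - cl σ (max ((σ - b) + χ) (c + ξ))) * (σ - cl σ (max ((σ - b) - ξ) (c - χ))))]
    apply intervalIntegral.integral_congr
    intro c _
    simp only
    rw [show (σ - b) + χ = σ - (b - χ) by ring, show (σ - c) + ξ = σ - (c - ξ) by ring,
      show (σ - b) - ξ = σ - (b + ξ) by ring, show (σ - c) - χ = σ - (c + χ) by ring,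
      max_sub_sub, max_sub_sub, cl_sub hσ.le, cl_sub hσ.le]
    ring
  have hswap : ∀ χ' ξ' : ℝ, (∫ b in (0:ℝ)..σ, ∫ c in (0:ℝ)..σ,
      cl σ (min (b + χ') (c + ξ')) * cl σ (min (b - ξ') (c - χ'))) =
      ∫ b in (0:ℝ)..σ, ∫ c in (0:ℝ)..σ,
        cl σ (min (b + ξ') (c + χ')) * cl σ (min (b - χ') (c - ξ')) := by
    intro χ' ξ'
    rw [swap_lemma hσ.le (contG1 χ' ξ')]
    apply intervalIntegral.integral_congr
    intro b _
    apply intervalIntegral.integral_congr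
    intro c _
    simp only
    rw [min_comm (c + χ') (b + ξ'), min_comm (c - ξ') (b - χ')]
  rw [hrefl, hswap ξ χ]
  -- now both summands are I1 (χ, ξ); finish with range analysis
  have hfin1 : (∫ b in (0:ℝ)..σ, ∫ c in (0:ℝ)..σ, h1 σ s (min b c))
      + (∫ b in (0:ℝ)..σ, ∫ c in (0:ℝ)..σ, h1 σ s (min b c)) = σ ^ 4 * Tval s σ := by
    rcases le_or_gt σ s with hr | hr
    · rw [K1_high hσ hr, Tval, if_pos ((one_le_div hσ).mpr hr)]
      ring
    · rcases lt_or_ge σ (2 * s) with hr2 | hr2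
      · rw [K1_mid hs hσ hr2.le hr.le, Tval, if_neg (by rw [one_le_div hσ]; linarith),
          if_pos (by rw [lt_div_iff₀ hσ]; linarith)]
        field_simp
        ring
      · rw [K1_low hs hσ hr2, Tval, if_neg (by rw [one_le_div hσ]; linarith),
          if_neg (by rw [not_lt, div_le_iff₀ hσ]; linarith)]
        field_simp
        ring
  have hfin2 : (∫ b in (0:ℝ)..σ, ∫ c in (0:ℝ)..σ, q2 σ s b c * q2 σ s b c)
      + (∫ b in (0:ℝ)..σ, ∫ c in (0:ℝ)..σ, q2 σ s b c * q2 σ s b c) = σ ^ 4 * Tval s σ := by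
    rcases le_or_gt σ s with hr | hr
    · rw [K2_high hσ hr, Tval, if_pos ((one_le_div hσ).mpr hr)]
      ring
    · rcases lt_or_ge σ (2 * s) with hr2 | hr2
      · rw [K2_mid hs hσ hr2.le hr.le, Tval, if_neg (by rw [one_le_div hσ]; linarith),
          if_pos (by rw [lt_div_iff₀ hσ]; linarith)]
        field_simp
        ring
      · rw [K2_low hs hσ hr2, Tval, if_neg (by rw [one_le_div hσ]; linarith),
          if_neg (by rw [not_lt, div_le_iff₀ hσ]; linarith)]
        field_simp
        ring
  rcases hχ with hc1 | hc1 <;> rcases hξ with hc2 | hc2 <;> rw [hc1, hc2]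
  · -- (s, s) : K1 form
    rw [show (∫ b in (0:ℝ)..σ, ∫ c in (0:ℝ)..σ,
        cl σ (min (b + s) (c + s)) * cl σ (min (b - s) (c - s))) =
        ∫ b in (0:ℝ)..σ, ∫ c in (0:ℝ)..σ, h1 σ s (min b c) from
      intervalIntegral.integral_congr fun b _ =>
        intervalIntegral.integral_congr fun c _ => by
          simp only [h1, min_add_add_right]
          rw [show min (b - s) (c - s) = min b c - s by
            simp only [sub_eq_add_neg, min_add_add_right]]]
    exact hfin1
  · -- (s, -s) : K2 form
    rw [show (∫ b in (0:ℝ)..σ, ∫ c in (0:ℝ)..σ,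
        cl σ (min (b + s) (c + -s)) * cl σ (min (b - -s) (c - s))) =
        ∫ b in (0:ℝ)..σ, ∫ c in (0:ℝ)..σ, q2 σ s b c * q2 σ s b c from
      intervalIntegral.integral_congr fun b _ =>
        intervalIntegral.integral_congr fun c _ => by
          simp only [q2]
          rw [show c + -s = c - s by ring, show b - -s = b + s by ring]]
    exact hfin2
  · -- (-s, s) : swap to K2 form
    rw [hswap (-s) s]
    rw [show (∫ b in (0:ℝ)..σ, ∫ c in (0:ℝ)..σ,
        cl σ (min (b + s) (c + -s)) * cl σ (min (b - -s) (c - s))) =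
        ∫ b in (0:ℝ)..σ, ∫ c in (0:ℝ)..σ, q2 σ s b c * q2 σ s b c from
      intervalIntegral.integral_congr fun b _ =>
        intervalIntegral.integral_congr fun c _ => by
          simp only [q2]
          rw [show c + -s = c - s by ring, show b - -s = b + s by ring]]
    exact hfin2
  · -- (-s, -s) : K1 form
    rw [show (∫ b in (0:ℝ)..σ, ∫ c in (0:ℝ)..σ,
        cl σ (min (b + -s) (c + -s)) * cl σ (min (b - -s) (c - -s))) =
        ∫ b in (0:ℝ)..σ, ∫ c in (0:ℝ)..σ, h1 σ s (min b c) from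
      intervalIntegral.integral_congr fun b _ =>
        intervalIntegral.integral_congr fun c _ => by
          simp only [h1]
          rw [show b + -s = b - s by ring, show c + -s = c - s by ring,
            show b - -s = b + s by ring, show c - -s = c + s by ring,
            show min (b - s) (c - s) = min b c - s by
              simp only [sub_eq_add_neg, min_add_add_right],
            min_add_add_right, mul_comm]]
    exact hfin1

/-! ### the uniform measure on [0, σ] -/

lemma vol_Iio {σ : ℝ} (hσ : 0 < σ) (x : ℝ) :
    volume (Iio x ∩ Icc 0 σ) = ENNReal.ofReal (cl σ x) := by
  rcases le_or_gt x 0 with hx | hx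
  · rw [show Iio x ∩ Icc 0 σ = ∅ by
      ext y
      simp only [mem_inter_iff, mem_Iio, mem_Icc, mem_empty_iff_false, iff_false]
      rintro ⟨h1, h2, h3⟩
      linarith, measure_empty, cl_of_nonpos hx, ENNReal.ofReal_zero]
  · rcases le_or_gt x σ with hx2 | hx2
    · rw [show Iio x ∩ Icc 0 σ = Ico 0 x by
        ext y
        simp only [mem_inter_iff, mem_Iio, mem_Icc, mem_Ico]
        constructor
        · rintro ⟨h1, h2, h3⟩; exact ⟨h2, h1⟩
        · rintro ⟨h1, h2⟩; exact ⟨h2, h1, by linarith⟩,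
      Real.volume_Ico, cl_of_mem hx.le hx2, sub_zero]
    · have hss : Icc (0:ℝ) σ ⊆ Iio x := fun y hy => lt_of_le_of_lt hy.2 hx2
      rw [inter_eq_self_of_subset_right hss,
        Real.volume_Icc, cl_of_ge hσ.le hx2.le, sub_zero]

lemma vol_Iic {σ : ℝ} (hσ : 0 < σ) (x : ℝ) :
    volume (Iic x ∩ Icc 0 σ) = ENNReal.ofReal (cl σ x) := by
  have hsub : Iic x ∩ Icc 0 σ ⊆ (({x} : Set ℝ) ∪ (Iio x ∩ Icc 0 σ)) := by
    rintro y ⟨h1, h2⟩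
    rcases eq_or_lt_of_le (mem_Iic.mp h1) with h | h
    · exact Or.inl (by simp [h])
    · exact Or.inr ⟨h, h2⟩
  refine le_antisymm ?_ ?_
  · calc volume (Iic x ∩ Icc 0 σ) ≤ volume ((({x} : Set ℝ) ∪ (Iio x ∩ Icc 0 σ))) := measure_mono hsub
    _ ≤ volume {x} + volume (Iio x ∩ Icc 0 σ) := measure_union_le _ _
    _ = ENNReal.ofReal (cl σ x) := by rw [Real.volume_singleton, zero_add, vol_Iio hσ]
  · rw [← vol_Iio hσ]
    exact measure_mono (inter_subset_inter_left _ Iio_subset_Iic_self)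

lemma vol_Ici {σ : ℝ} (hσ : 0 < σ) (x : ℝ) :
    volume (Ici x ∩ Icc 0 σ) = ENNReal.ofReal (σ - cl σ x) := by
  rcases le_or_gt x 0 with hx | hx
  · have hss : Icc (0:ℝ) σ ⊆ Ici x := fun y hy => le_trans hx hy.1
    rw [inter_eq_self_of_subset_right hss,
      Real.volume_Icc, cl_of_nonpos hx, sub_zero]
  · rcases le_or_gt x σ with hx2 | hx2
    · rw [show Ici x ∩ Icc 0 σ = Icc x σ by
        ext y
        simp only [mem_inter_iff, mem_Ici, mem_Icc]
        constructor
        · rintro ⟨h1, h2, h3⟩; exact ⟨h1, h3⟩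
        · rintro ⟨h1, h2⟩; exact ⟨h1, by linarith, h2⟩,
      Real.volume_Icc, cl_of_mem hx.le hx2]
    · rw [show Ici x ∩ Icc 0 σ = ∅ by
        ext y
        simp only [mem_inter_iff, mem_Ici, mem_Icc, mem_empty_iff_false, iff_false]
        rintro ⟨h1, h2, h3⟩
        linarith, measure_empty, cl_of_ge hσ.le hx2.le, sub_self, ENNReal.ofReal_zero]

lemma vol_Ioi {σ : ℝ} (hσ : 0 < σ) (x : ℝ) :
    volume (Ioi x ∩ Icc 0 σ) = ENNReal.ofReal (σ - cl σ x) := by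
  have hsub : Ici x ∩ Icc 0 σ ⊆ (({x} : Set ℝ) ∪ (Ioi x ∩ Icc 0 σ)) := by
    rintro y ⟨h1, h2⟩
    rcases eq_or_lt_of_le (mem_Ici.mp h1) with h | h
    · exact Or.inl (by simp [h.symm])
    · exact Or.inr ⟨h, h2⟩
  refine le_antisymm ?_ ?_
  · rw [← vol_Ici hσ]
    exact measure_mono (inter_subset_inter_left _ Ioi_subset_Ici_self)
  · rw [← vol_Ici hσ]
    calc volume (Ici x ∩ Icc 0 σ) ≤ volume ((({x} : Set ℝ) ∪ (Ioi x ∩ Icc 0 σ))) := measure_mono hsub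
    _ ≤ volume {x} + volume (Ioi x ∩ Icc 0 σ) := measure_union_le _ _
    _ = volume (Ioi x ∩ Icc 0 σ) := by rw [Real.volume_singleton, zero_add]

/-- the uniform probability measure on `[0, σ]` -/
noncomputable def unif (σ : ℝ) : Measure ℝ :=
  (ENNReal.ofReal σ)⁻¹ • volume.restrict (Icc 0 σ)

lemma unif_prob {σ : ℝ} (hσ : 0 < σ) : IsProbabilityMeasure (unif σ) := by
  constructor
  rw [unif, Measure.smul_apply, Measure.restrict_apply MeasurableSet.univ, univ_inter,
    Real.volume_Icc, sub_zero, smul_eq_mul,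
    ENNReal.inv_mul_cancel (by simp [hσ.le, not_le.mpr hσ]) (by simp)]

lemma unif_Iio {σ : ℝ} (hσ : 0 < σ) (x : ℝ) :
    unif σ (Iio x) = (ENNReal.ofReal σ)⁻¹ * ENNReal.ofReal (cl σ x) := by
  rw [unif, Measure.smul_apply, Measure.restrict_apply measurableSet_Iio, vol_Iio hσ, smul_eq_mul]

lemma unif_Iic {σ : ℝ} (hσ : 0 < σ) (x : ℝ) :
    unif σ (Iic x) = (ENNReal.ofReal σ)⁻¹ * ENNReal.ofReal (cl σ x) := by
  rw [unif, Measure.smul_apply, Measure.restrict_apply measurableSet_Iic, vol_Iic hσ, smul_eq_mul]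

lemma unif_Ici {σ : ℝ} (hσ : 0 < σ) (x : ℝ) :
    unif σ (Ici x) = (ENNReal.ofReal σ)⁻¹ * ENNReal.ofReal (σ - cl σ x) := by
  rw [unif, Measure.smul_apply, Measure.restrict_apply measurableSet_Ici, vol_Ici hσ, smul_eq_mul]

lemma unif_Ioi {σ : ℝ} (hσ : 0 < σ) (x : ℝ) :
    unif σ (Ioi x) = (ENNReal.ofReal σ)⁻¹ * ENNReal.ofReal (σ - cl σ x) := by
  rw [unif, Measure.smul_apply, Measure.restrict_apply measurableSet_Ioi, vol_Ioi hσ, smul_eq_mul]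

lemma unif_prod_eq {σ : ℝ} (hσ : 0 < σ) :
    (unif σ).prod (unif σ) = ((ENNReal.ofReal σ)⁻¹ * (ENNReal.ofReal σ)⁻¹) •
      ((volume.restrict (Icc 0 σ)).prod (volume.restrict (Icc 0 σ))) := by
  haveI := unif_prob hσ
  refine Measure.prod_eq fun A B hA hB => ?_
  rw [Measure.smul_apply, Measure.prod_prod, unif, Measure.smul_apply, Measure.smul_apply,
    smul_eq_mul, smul_eq_mul, smul_eq_mul]
  ring

/-- the RSE event expressed on the four η-values `((B, C), (A, D))`. -/
def Sset (e1 e2 : ℝ) : Set ((ℝ × ℝ) × ℝ × ℝ) :=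
  {p | (p.2.1 - p.1.1 < e1 ∧ p.2.1 - p.1.2 < e2 ∧ ¬(p.1.2 - p.2.2 < e1) ∧ ¬(p.1.1 - p.2.2 < e2))
    ∨ (¬(p.2.1 - p.1.1 < e1) ∧ ¬(p.2.1 - p.1.2 < e2) ∧ (p.1.2 - p.2.2 < e1)
        ∧ (p.1.1 - p.2.2 < e2))}

lemma measurable_Sset (e1 e2 : ℝ) : MeasurableSet (Sset e1 e2) := by
  have m1 : MeasurableSet {p : (ℝ × ℝ) × ℝ × ℝ | p.2.1 - p.1.1 < e1} :=
    measurableSet_lt (measurable_snd.fst.sub measurable_fst.fst) measurable_const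
  have m2 : MeasurableSet {p : (ℝ × ℝ) × ℝ × ℝ | p.2.1 - p.1.2 < e2} :=
    measurableSet_lt (measurable_snd.fst.sub measurable_fst.snd) measurable_const
  have m3 : MeasurableSet {p : (ℝ × ℝ) × ℝ × ℝ | p.1.2 - p.2.2 < e1} :=
    measurableSet_lt (measurable_fst.snd.sub measurable_snd.snd) measurable_const
  have m4 : MeasurableSet {p : (ℝ × ℝ) × ℝ × ℝ | p.1.1 - p.2.2 < e2} :=
    measurableSet_lt (measurable_fst.fst.sub measurable_snd.snd) measurable_const
  exact (m1.inter (m2.inter (m3.compl.inter m4.compl))).union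
    (m1.compl.inter (m2.compl.inter (m3.inter m4)))

lemma section_eq {σ : ℝ} (hσ : 0 < σ) (e1 e2 : ℝ) (bc : ℝ × ℝ) :
    ((unif σ).prod (unif σ)) (Prod.mk bc ⁻¹' Sset e1 e2) =
      (ENNReal.ofReal σ)⁻¹ * (ENNReal.ofReal σ)⁻¹ * ENNReal.ofReal
        (cl σ (min (bc.1 + e1) (bc.2 + e2)) * cl σ (min (bc.1 - e2) (bc.2 - e1))
          + (σ - cl σ (max (bc.1 + e1) (bc.2 + e2))) * (σ - cl σ (max (bc.1 - e2) (bc.2 - e1)))) := by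
  haveI := unif_prob hσ
  have hpre : Prod.mk bc ⁻¹' Sset e1 e2 =
      (Iio (min (bc.1 + e1) (bc.2 + e2)) ×ˢ Iic (min (bc.1 - e2) (bc.2 - e1)))
      ∪ (Ici (max (bc.1 + e1) (bc.2 + e2)) ×ˢ Ioi (max (bc.1 - e2) (bc.2 - e1))) := by
    ext q
    simp only [mem_preimage, Sset, mem_setOf_eq, mem_union, mem_prod, mem_Iio, mem_Iic,
      mem_Ici, mem_Ioi, lt_min_iff, le_min_iff, max_le_iff, max_lt_iff, not_lt]
    constructor
    · rintro (⟨h1, h2, h3, h4⟩ | ⟨h1, h2, h3, h4⟩)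
      · exact Or.inl ⟨⟨by linarith, by linarith⟩, by linarith, by linarith⟩
      · exact Or.inr ⟨⟨by linarith, by linarith⟩, by linarith, by linarith⟩
    · rintro (⟨⟨h1, h2⟩, h3, h4⟩ | ⟨⟨h1, h2⟩, h3, h4⟩)
      · exact Or.inl ⟨by linarith, by linarith, by linarith, by linarith⟩
      · exact Or.inr ⟨by linarith, by linarith, by linarith, by linarith⟩
  have hdisj : Disjoint
      (Iio (min (bc.1 + e1) (bc.2 + e2)) ×ˢ Iic (min (bc.1 - e2) (bc.2 - e1)))
      (Ici (max (bc.1 + e1) (bc.2 + e2)) ×ˢ Ioi (max (bc.1 - e2) (bc.2 - e1))) := by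
    rw [Set.disjoint_left]
    rintro q ⟨hq1, _⟩ ⟨hq2, _⟩
    simp only [mem_Iio, mem_Ici] at hq1 hq2
    have h1 := lt_of_lt_of_le hq1 (min_le_left _ _)
    have h2 := le_trans (le_max_left _ _) hq2
    linarith
  have n1 : 0 ≤ cl σ (min (bc.1 + e1) (bc.2 + e2)) := cl_nonneg _ _
  have n2 : 0 ≤ cl σ (min (bc.1 - e2) (bc.2 - e1)) := cl_nonneg _ _
  have n3 : 0 ≤ σ - cl σ (max (bc.1 + e1) (bc.2 + e2)) := sub_nonneg.mpr (cl_le hσ.le _)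
  have n4 : 0 ≤ σ - cl σ (max (bc.1 - e2) (bc.2 - e1)) := sub_nonneg.mpr (cl_le hσ.le _)
  rw [hpre, measure_union hdisj (measurableSet_Ici.prod measurableSet_Ioi),
    Measure.prod_prod, Measure.prod_prod, unif_Iio hσ, unif_Iic hσ, unif_Ici hσ, unif_Ioi hσ,
    ENNReal.ofReal_add (mul_nonneg n1 n2) (mul_nonneg n3 n4),
    ENNReal.ofReal_mul n1, ENNReal.ofReal_mul n3]
  ring

end Stmt12Aux

open Stmt12Aux

/-- in the classical Rough Mount Fuji model
`f(g) = (s/2)·Σᵢ xᵢ + η(g)` with `xᵢ ∈ {±1}` and `η(g)` i.i.d. Uniform[0,σ], the expected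
fraction of RSE motifs (= the probability that any given motif is RSE) is `0` if `s/σ ≥ 1`,
`(2/3)(1 − s/σ)³` if `1/2 < s/σ < 1`, and `1/3 − 2(s/σ)²(1 − s/σ)` if `s/σ ≤ 1/2`. -/
theorem stmt_12 (L : ℕ) {Ω : Type*} [MeasurableSpace Ω]
    (μ : Measure Ω) [IsProbabilityMeasure μ]
    (s σ : ℝ) (hs : 0 < s) (hσ : 0 < σ)
    (η : Ω → (Fin L → Bool) → ℝ) (hmeas : ∀ g, Measurable fun ω => η ω g)
    (hindep : iIndepFun (fun (g : Fin L → Bool) ω => η ω g) μ)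
    (hunif : ∀ g : Fin L → Bool,
      Measure.map (fun ω => η ω g) μ =
        (ENNReal.ofReal σ)⁻¹ • volume.restrict (Set.Icc 0 σ))
    (f : Ω → (Fin L → Bool) → ℝ)
    (hf : ∀ ω g, f ω g =
      (s / 2) * ∑ i : Fin L, (if g i then (1 : ℝ) else -1) + η ω g)
    (g : Fin L → Bool) (i j : Fin L) (hij : i ≠ j) :
    μ {ω | RSE (fun g' => f ω g') g i j} =
      ENNReal.ofReal
        (if 1 ≤ s / σ then 0
         else if 1 / 2 < s / σ then (2 / 3) * (1 - s / σ) ^ 3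
         else 1 / 3 - 2 * (s / σ) ^ 2 * (1 - s / σ)) := by
  classical
  have hr0 : (ENNReal.ofReal σ) ≠ 0 := (ENNReal.ofReal_pos.mpr hσ).ne'
  have hrt : (ENNReal.ofReal σ) ≠ ⊤ := ENNReal.ofReal_ne_top
  haveI : IsProbabilityMeasure (unif σ) := unif_prob hσ
  -- genotype bookkeeping
  have hfgji : flp g j i = g i := by
    simp [flp, Function.update_of_ne hij]
  have hfgij : flp g i j = g j := by
    simp [flp, Function.update_of_ne hij.symm]
  have hcomm : flp (flp g i) j = flp (flp g j) i := by
    simp only [flp]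
    rw [Function.update_of_ne hij.symm, Function.update_of_ne hij]
    exact Function.update_comm hij _ _ _
  have hne : ∀ (v w : Fin L → Bool) (k : Fin L), v k = !(w k) → v ≠ w := by
    intro v w k hk h
    rw [h] at hk
    exact absurd hk (by simp)
  have dBA : flp g i ≠ g := hne _ _ i (by simp [flp])
  have dCA : flp g j ≠ g := hne _ _ j (by simp [flp])
  have dBC : flp g i ≠ flp g j := hne _ _ i (by simp [flp, Function.update_of_ne hij, hfgji])
  have dBD : flp g i ≠ flp (flp g j) i := hne _ _ j
    (by
      rw [show flp (flp g j) i j = !(g j) by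
        simp [flp, Function.update_of_ne hij.symm],
        show flp g i j = g j from hfgij]
      simp)
  have dCD : flp g j ≠ flp (flp g j) i := hne _ _ i
    (by
      rw [show flp (flp g j) i i = !(g i) by simp [flp, Function.update_of_ne hij], hfgji]
      simp)
  have dAD : g ≠ flp (flp g j) i := hne _ _ i
    (by
      rw [show flp (flp g j) i i = !(g i) by simp [flp, Function.update_of_ne hij]]
      simp)
  -- the additive fitness increment of one flip
  have hK : ∀ (v : Fin L → Bool) (k : Fin L),
      (s / 2) * ∑ i', (if flp v k i' then (1:ℝ) else -1) =
        (s / 2) * ∑ i', (if v i' then (1:ℝ) else -1) + (if v k then -s else s) := by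
    intro v k
    have h1 : (fun i' => if flp v k i' then (1:ℝ) else -1) =
        Function.update (fun i' => if v i' then (1:ℝ) else -1) k (if !v k then 1 else -1) := by
      funext i'
      by_cases h : i' = k
      · subst h; simp [flp]
      · simp [flp, Function.update_of_ne h]
    rw [h1, Finset.sum_update_of_mem (Finset.mem_univ k),
      ← Finset.add_sum_erase Finset.univ _ (Finset.mem_univ k), Finset.erase_eq]
    cases hv : v k <;> simp [hv] <;> ring
  -- the four edge comparisons
  have e1iff : ∀ ω, (f ω g < f ω (flp g i)) ↔
      (η ω g - η ω (flp g i) < if g i then -s else s) := by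
    intro ω
    rw [hf, hf, hK g i]
    constructor <;> intro <;> linarith
  have e2iff : ∀ ω, (f ω (flp g j) < f ω (flp (flp g j) i)) ↔
      (η ω (flp g j) - η ω (flp (flp g j) i) < if g i then -s else s) := by
    intro ω
    rw [hf, hf, hK (flp g j) i, hfgji]
    constructor <;> intro <;> linarith
  have e3iff : ∀ ω, (f ω g < f ω (flp g j)) ↔
      (η ω g - η ω (flp g j) < if g j then -s else s) := by
    intro ω
    rw [hf, hf, hK g j]
    constructor <;> intro <;> linarith
  have e4iff : ∀ ω, (f ω (flp g i) < f ω (flp (flp g j) i)) ↔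
      (η ω (flp g i) - η ω (flp (flp g j) i) < if g j then -s else s) := by
    intro ω
    rw [← hcomm, hf, hf, hK (flp g i) j, hfgij]
    constructor <;> intro <;> linarith
  -- the event as a preimage
  have hsetE : {ω | RSE (fun g' => f ω g') g i j} =
      (fun ω => ((η ω (flp g i), η ω (flp g j)), (η ω g, η ω (flp (flp g j) i)))) ⁻¹'
        Sset (if g i then -s else s) (if g j then -s else s) := by
    ext ω
    simp only [mem_setOf_eq, mem_preimage, RSE, SignFlip, Sset, mem_setOf_eq]
    rw [hcomm, e1iff ω, e2iff ω, e3iff ω, e4iff ω]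
    by_cases hP : η ω g - η ω (flp g i) < (if g i then -s else s) <;>
      by_cases hQ : η ω (flp g j) - η ω (flp (flp g j) i) < (if g i then -s else s) <;>
      by_cases hR : η ω g - η ω (flp g j) < (if g j then -s else s) <;>
      by_cases hT : η ω (flp g i) - η ω (flp (flp g j) i) < (if g j then -s else s) <;>
      simp only [hP, hQ, hR, hT, not_true, not_false_iff, true_iff, iff_true, false_iff,
        iff_false, true_and, and_true, false_and, and_false, true_or, or_true, false_or,
        or_false, not_not] <;>
      first
        | tauto
        | (exfalso; linarith)
        | linarith
  -- joint law of the four η values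
  have hmapBC : μ.map (fun ω => (η ω (flp g i), η ω (flp g j))) = (unif σ).prod (unif σ) := by
    rw [(indepFun_iff_map_prod_eq_prod_map_map (hmeas _).aemeasurable
      (hmeas _).aemeasurable).mp (hindep.indepFun dBC), hunif, hunif]
    rfl
  have hmapAD : μ.map (fun ω => (η ω g, η ω (flp (flp g j) i))) = (unif σ).prod (unif σ) := by
    rw [(indepFun_iff_map_prod_eq_prod_map_map (hmeas _).aemeasurable
      (hmeas _).aemeasurable).mp (hindep.indepFun dAD), hunif, hunif]
    rfl
  have hBCAD : IndepFun (fun ω => (η ω (flp g i), η ω (flp g j)))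
      (fun ω => (η ω g, η ω (flp (flp g j) i))) μ :=
    hindep.indepFun_prodMk_prodMk hmeas (flp g i) (flp g j) g (flp (flp g j) i)
      dBA dBD dCA dCD
  have hmapT : μ.map (fun ω => ((η ω (flp g i), η ω (flp g j)),
      (η ω g, η ω (flp (flp g j) i)))) = ((unif σ).prod (unif σ)).prod ((unif σ).prod (unif σ)) := by
    rw [(indepFun_iff_map_prod_eq_prod_map_map
      (((hmeas _).prodMk (hmeas _))).aemeasurable
      (((hmeas _).prodMk (hmeas _))).aemeasurable).mp hBCAD, hmapBC, hmapAD]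
  have hmT : Measurable (fun ω => ((η ω (flp g i), η ω (flp g j)),
      (η ω g, η ω (flp (flp g j) i)))) :=
    ((hmeas _).prodMk (hmeas _)).prodMk ((hmeas _).prodMk (hmeas _))
  -- sign disjunctions
  have hχ : (if g i then -s else s) = s ∨ (if g i then -s else s) = -s := by
    by_cases h : g i <;> simp [h]
  have hξ : (if g j then -s else s) = s ∨ (if g j then -s else s) = -s := by
    by_cases h : g j <;> simp [h]
  -- continuity of the section integrand
  have hGcont : Continuous (fun z : ℝ × ℝ =>
      cl σ (min (z.1 + (if g i then -s else s)) (z.2 + (if g j then -s else s)))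
        * cl σ (min (z.1 - (if g j then -s else s)) (z.2 - (if g i then -s else s)))
      + (σ - cl σ (max (z.1 + (if g i then -s else s)) (z.2 + (if g j then -s else s))))
        * (σ - cl σ (max (z.1 - (if g j then -s else s)) (z.2 - (if g i then -s else s))))) := by
    apply Continuous.add
    · exact (((continuous_cl σ).comp ((continuous_fst.add continuous_const).min
        (continuous_snd.add continuous_const))).mul
        ((continuous_cl σ).comp ((continuous_fst.sub continuous_const).min
        (continuous_snd.sub continuous_const))))
    · exact ((continuous_const.sub ((continuous_cl σ).comp
        ((continuous_fst.add continuous_const).max (continuous_snd.add continuous_const)))).mul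
        (continuous_const.sub ((continuous_cl σ).comp
        ((continuous_fst.sub continuous_const).max (continuous_snd.sub continuous_const)))))
  have hIntOn : IntegrableOn (fun z : ℝ × ℝ =>
      cl σ (min (z.1 + (if g i then -s else s)) (z.2 + (if g j then -s else s)))
        * cl σ (min (z.1 - (if g j then -s else s)) (z.2 - (if g i then -s else s)))
      + (σ - cl σ (max (z.1 + (if g i then -s else s)) (z.2 + (if g j then -s else s))))
        * (σ - cl σ (max (z.1 - (if g j then -s else s)) (z.2 - (if g i then -s else s)))))
      (Icc 0 σ ×ˢ Icc 0 σ) (volume.prod volume) := by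
    rw [← Measure.volume_eq_prod]
    exact hGcont.continuousOn.integrableOn_compact (isCompact_Icc.prod isCompact_Icc)
  -- compute the measure
  rw [hsetE, ← Measure.map_apply hmT (measurable_Sset _ _), hmapT,
    Measure.prod_apply (measurable_Sset _ _),
    lintegral_congr (section_eq hσ (if g i then -s else s) (if g j then -s else s)),
    lintegral_const_mul' _ _ (ENNReal.mul_ne_top (ENNReal.inv_ne_top.mpr hr0)
      (ENNReal.inv_ne_top.mpr hr0)),
    unif_prod_eq hσ, lintegral_smul_measure, Measure.prod_restrict,
    ← MeasureTheory.ofReal_integral_eq_lintegral_ofReal hIntOn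
      (ae_of_all _ (fun z => add_nonneg
        (mul_nonneg (cl_nonneg _ _) (cl_nonneg _ _))
        (mul_nonneg (sub_nonneg.mpr (cl_le hσ.le _)) (sub_nonneg.mpr (cl_le hσ.le _))))),
    setIntegral_prod _ hIntOn]
  simp_rw [integral_Icc_eq_integral_Ioc, ← intervalIntegral.integral_of_le hσ.le]
  rw [coreP hs hσ _ _ hχ hξ,
    ENNReal.ofReal_mul (by positivity : (0:ℝ) ≤ σ ^ 4), ENNReal.ofReal_pow hσ.le,
    show (if 1 ≤ s / σ then (0:ℝ)
      else if 1 / 2 < s / σ then 2 / 3 * (1 - s / σ) ^ 3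
      else 1 / 3 - 2 * (s / σ) ^ 2 * (1 - s / σ)) = Tval s σ from rfl]
  have hcc : (ENNReal.ofReal σ)⁻¹ * ENNReal.ofReal σ = 1 := ENNReal.inv_mul_cancel hr0 hrt
  have hre : (ENNReal.ofReal σ)⁻¹ * (ENNReal.ofReal σ)⁻¹ *
      ((ENNReal.ofReal σ)⁻¹ * (ENNReal.ofReal σ)⁻¹ *
        ((ENNReal.ofReal σ) ^ 4 * ENNReal.ofReal (Tval s σ))) =
      ((ENNReal.ofReal σ)⁻¹ * ENNReal.ofReal σ) * (((ENNReal.ofReal σ)⁻¹ * ENNReal.ofReal σ) *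
        (((ENNReal.ofReal σ)⁻¹ * ENNReal.ofReal σ) * (((ENNReal.ofReal σ)⁻¹ * ENNReal.ofReal σ) *
          ENNReal.ofReal (Tval s σ)))) := by ring
  rw [smul_eq_mul, hre, hcc, one_mul, one_mul, one_mul, one_mul]
end

section
/- In the sparse pairwise allelic incompatibility (Ising) model on {±1}^L with fitness f(g) = (1/2)Σᵢ sᵢSᵢ + Σ_{(i,j)∈G} J_{ij}SᵢSⱼ, where sᵢ ~ N(0, σ_s²) i.i.d., J_{ij} ~ N(0, σ_J²) i.i.d., and G is a graph of degree 1 (a perfect matching, I = 1): conditional on loci i and j being matched partners, the fitness-effect variables satisfy Var[Δ_i f(g)] = σ_s² + 4σ_J², Cov[Δ_i f(g), Δ_j f(g)] = 4σ_J², and Cov[Δ_i f(g), Δ_i f(g_[j])] = σ_s² − 4σ_J². Consequently, by the Gaussian orthant formula and the motif-counting identities, the conditional RSE probability exceeds the conditional SSE probability whenever 4σ_J² > σ_s², so reciprocal sign epistasis dominates simple sign epistasis among interacting pairs when interactions are strong. -/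
open MeasureTheory ProbabilityTheory Finset

/-- Covariance of two real random variables. -/
noncomputable def cov {Ω : Type*} [MeasurableSpace Ω] (μ : Measure Ω) (X Y : Ω → ℝ) : ℝ :=
  ∫ ω, (X ω - ∫ x, X x ∂μ) * (Y ω - ∫ x, Y x ∂μ) ∂μ

/-- The spin value `±1` of a biallelic locus. -/
def spin (b : Bool) : ℝ := if b then 1 else -1

open Real
open scoped NNReal ENNReal



lemma aux_int_mul_exp {b : ℝ} (hb : 0 < b) :
    ∫ x : ℝ, x * Real.exp (-b * x ^ 2) = 0 := by
  have hderiv : ∀ x : ℝ, HasDerivAt (fun x : ℝ => -(2*b)⁻¹ * Real.exp (-b * x ^ 2))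
      (x * Real.exp (-b * x ^ 2)) x := by
    intro x
    have h1 : HasDerivAt (fun x : ℝ => -b * x ^ 2) (-b * (2 * x)) x := by
      simpa using ((hasDerivAt_pow 2 x).const_mul (-b))
    have h2 := (h1.exp).const_mul (-(2*b)⁻¹)
    refine h2.congr_deriv ?_
    field_simp [hb.ne']
  exact integral_eq_zero_of_hasDerivAt_of_integrable hderiv
    (integrable_mul_exp_neg_mul_sq hb)
    ((integrable_exp_neg_mul_sq hb).const_mul _)

lemma aux_integrable_sq_exp {b : ℝ} (hb : 0 < b) :
    Integrable (fun x : ℝ => x ^ 2 * Real.exp (-b * x ^ 2)) := by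
  have h := integrable_rpow_mul_exp_neg_mul_sq hb (s := 2) (by norm_num)
  have : (fun x : ℝ => x ^ (2:ℝ) * Real.exp (-b * x ^ 2))
      = fun x : ℝ => x ^ 2 * Real.exp (-b * x ^ 2) := by
    funext x
    rw [show (2:ℝ) = ((2:ℕ):ℝ) by norm_num, Real.rpow_natCast]
  rwa [this] at h

lemma aux_int_sq_exp {b : ℝ} (hb : 0 < b) :
    ∫ x : ℝ, x ^ 2 * Real.exp (-b * x ^ 2) = (2*b)⁻¹ * Real.sqrt (π / b) := by
  have hint2 := aux_integrable_sq_exp hb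
  have hderiv : ∀ x : ℝ, HasDerivAt (fun x : ℝ => -(2*b)⁻¹ * (x * Real.exp (-b * x ^ 2)))
      (x ^ 2 * Real.exp (-b * x ^ 2) - (2*b)⁻¹ * Real.exp (-b * x ^ 2)) x := by
    intro x
    have h1 : HasDerivAt (fun x : ℝ => -b * x ^ 2) (-b * (2 * x)) x := by
      simpa using ((hasDerivAt_pow 2 x).const_mul (-b))
    have h2 := ((hasDerivAt_id x).mul h1.exp).const_mul (-(2*b)⁻¹)
    refine h2.congr_deriv ?_
    field_simp [hb.ne']
    simp only [id_eq]
    ring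
  have h0 := integral_eq_zero_of_hasDerivAt_of_integrable hderiv
      (hint2.sub ((integrable_exp_neg_mul_sq hb).const_mul _))
      ((integrable_mul_exp_neg_mul_sq hb).const_mul _)
  rw [integral_sub hint2 ((integrable_exp_neg_mul_sq hb).const_mul _),
    integral_const_mul, integral_gaussian] at h0
  linarith



section gaussaux
variable {b : ℝ}

lemma aux_pdf0_eq (v : ℝ≥0) (x : ℝ) : gaussianPDFReal 0 v x
    = (Real.sqrt (2*π*v))⁻¹ * Real.exp (-(2*(v:ℝ))⁻¹ * x^2) := by
  rw [gaussianPDFReal]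
  congr 1
  ring_nf

lemma aux_integral_gauss_fun {v : ℝ≥0} (hv : v ≠ 0) (g : ℝ → ℝ) :
    ∫ x, g x ∂(gaussianReal 0 v) = ∫ x, gaussianPDFReal 0 v x * g x := by
  rw [gaussianReal_of_var_ne_zero _ hv]
  rw [show gaussianPDF 0 v = fun x => ((Real.toNNReal (gaussianPDFReal 0 v x) : ℝ≥0) : ℝ≥0∞)
    from rfl]
  rw [integral_withDensity_eq_integral_smul ((measurable_gaussianPDFReal 0 v).real_toNNReal) g]
  congr 1
  funext x
  rw [NNReal.smul_def, Real.coe_toNNReal _ (gaussianPDFReal_nonneg 0 v x), smul_eq_mul]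

lemma aux_integrable_gauss_iff {v : ℝ≥0} (hv : v ≠ 0) (g : ℝ → ℝ) :
    Integrable g (gaussianReal 0 v)
      ↔ Integrable (fun x => gaussianPDFReal 0 v x * g x) := by
  rw [gaussianReal_of_var_ne_zero _ hv]
  rw [show gaussianPDF 0 v = fun x => ((Real.toNNReal (gaussianPDFReal 0 v x) : ℝ≥0) : ℝ≥0∞)
    from rfl]
  rw [integrable_withDensity_iff_integrable_smul
    ((measurable_gaussianPDFReal 0 v).real_toNNReal)]
  constructor <;> intro h <;> [skip; skip] <;>
  · have heq : (fun x => (Real.toNNReal (gaussianPDFReal 0 v x)) • g x)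
        = fun x => gaussianPDFReal 0 v x * g x := by
      funext x
      rw [NNReal.smul_def, Real.coe_toNNReal _ (gaussianPDFReal_nonneg 0 v x), smul_eq_mul]
    first
    | rwa [heq] at h
    | rwa [heq]

lemma aux_coe_pos {v : ℝ≥0} (hv : v ≠ 0) : 0 < (v:ℝ) :=
  NNReal.coe_pos.mpr (pos_iff_ne_zero.mpr hv)

lemma aux_integral_id_gauss {v : ℝ≥0} (hv : v ≠ 0) :
    ∫ x, x ∂(gaussianReal 0 v) = 0 := by
  have hv' := aux_coe_pos hv
  have hb : 0 < (2*(v:ℝ))⁻¹ := by positivity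
  rw [aux_integral_gauss_fun hv]
  have heq : (fun x => gaussianPDFReal 0 v x * x)
      = fun x => (Real.sqrt (2*π*(v:ℝ)))⁻¹ * (x * Real.exp (-(2*(v:ℝ))⁻¹ * x^2)) := by
    funext x; rw [aux_pdf0_eq]; ring
  rw [heq, integral_const_mul, aux_int_mul_exp hb, mul_zero]

lemma aux_integrable_id_gauss {v : ℝ≥0} (hv : v ≠ 0) :
    Integrable (fun x : ℝ => x) (gaussianReal 0 v) := by
  have hv' := aux_coe_pos hv
  have hb : 0 < (2*(v:ℝ))⁻¹ := by positivity
  rw [aux_integrable_gauss_iff hv]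
  have heq : (fun x => gaussianPDFReal 0 v x * x)
      = fun x => (Real.sqrt (2*π*(v:ℝ)))⁻¹ * (x * Real.exp (-(2*(v:ℝ))⁻¹ * x^2)) := by
    funext x; rw [aux_pdf0_eq]; ring
  rw [heq]
  exact (integrable_mul_exp_neg_mul_sq hb).const_mul _

lemma aux_integrable_sq_gauss {v : ℝ≥0} (hv : v ≠ 0) :
    Integrable (fun x : ℝ => x ^ 2) (gaussianReal 0 v) := by
  have hv' := aux_coe_pos hv
  have hb : 0 < (2*(v:ℝ))⁻¹ := by positivity
  rw [aux_integrable_gauss_iff hv]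
  have heq : (fun x => gaussianPDFReal 0 v x * x ^ 2)
      = fun x => (Real.sqrt (2*π*(v:ℝ)))⁻¹ * (x ^ 2 * Real.exp (-(2*(v:ℝ))⁻¹ * x^2)) := by
    funext x; rw [aux_pdf0_eq]; ring
  rw [heq]
  exact (aux_integrable_sq_exp hb).const_mul _

lemma aux_integral_sq_gauss {v : ℝ≥0} (hv : v ≠ 0) :
    ∫ x, x ^ 2 ∂(gaussianReal 0 v) = (v : ℝ) := by
  have hv' := aux_coe_pos hv
  have hb : 0 < (2*(v:ℝ))⁻¹ := by positivity
  rw [aux_integral_gauss_fun hv]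
  have heq : (fun x => gaussianPDFReal 0 v x * x ^ 2)
      = fun x => (Real.sqrt (2*π*(v:ℝ)))⁻¹ * (x ^ 2 * Real.exp (-(2*(v:ℝ))⁻¹ * x^2)) := by
    funext x; rw [aux_pdf0_eq]; ring
  rw [heq, integral_const_mul, aux_int_sq_exp hb]
  have h1 : (2*(2*(v:ℝ))⁻¹)⁻¹ = (v:ℝ) := by field_simp
  have h2 : π / (2*(v:ℝ))⁻¹ = 2*π*(v:ℝ) := by field_simp
  have h3 : 0 < Real.sqrt (2*π*(v:ℝ)) := Real.sqrt_pos.mpr (by positivity)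
  rw [h1, h2]
  field_simp

end gaussaux



lemma aux_rv_moments {Ω : Type*} [MeasurableSpace Ω] (μ : Measure Ω) [IsProbabilityMeasure μ]
    {X : Ω → ℝ} (hX : Measurable X) {v : ℝ≥0} (hv : v ≠ 0)
    (hmap : Measure.map X μ = gaussianReal 0 v) :
    MemLp X 2 μ ∧ (∫ ω, X ω ∂μ) = 0 ∧ (∫ ω, X ω ^ 2 ∂μ) = (v : ℝ) := by
  have hsq : Integrable (fun ω => X ω ^ 2) μ := by
    have h1 : Integrable (fun x : ℝ => x ^ 2) (Measure.map X μ) := by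
      rw [hmap]; exact aux_integrable_sq_gauss hv
    exact (integrable_map_measure ((measurable_id.pow_const 2).aestronglyMeasurable)
      hX.aemeasurable).mp h1
  refine ⟨(memLp_two_iff_integrable_sq hX.aestronglyMeasurable).mpr hsq, ?_, ?_⟩
  · have h1 : ∫ x, x ∂(Measure.map X μ) = 0 := by rw [hmap]; exact aux_integral_id_gauss hv
    rwa [integral_map (f := fun x : ℝ => x) hX.aemeasurable aestronglyMeasurable_id] at h1
  · have h1 : ∫ x, x ^ 2 ∂(Measure.map X μ) = (v : ℝ) := by
      rw [hmap]; exact aux_integral_sq_gauss hv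
    rwa [integral_map (f := fun x : ℝ => x ^ 2) hX.aemeasurable ((measurable_id.pow_const 2).aestronglyMeasurable)] at h1

lemma aux_integral_quad {Ω : Type*} [MeasurableSpace Ω] (μ : Measure Ω)
    (X Z X' Z' : Ω → ℝ) (α β γ δ : ℝ)
    (h1 : Integrable (fun ω => X ω * X' ω) μ) (h2 : Integrable (fun ω => X ω * Z' ω) μ)
    (h3 : Integrable (fun ω => Z ω * X' ω) μ) (h4 : Integrable (fun ω => Z ω * Z' ω) μ) :
    ∫ ω, (α * X ω + β * Z ω) * (γ * X' ω + δ * Z' ω) ∂μ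
      = α * γ * ∫ ω, X ω * X' ω ∂μ + α * δ * ∫ ω, X ω * Z' ω ∂μ
        + β * γ * ∫ ω, Z ω * X' ω ∂μ + β * δ * ∫ ω, Z ω * Z' ω ∂μ := by
  have g4 : Integrable (fun ω => β * δ * (Z ω * Z' ω)) μ := h4.const_mul _
  have g3 : Integrable (fun ω => β * γ * (Z ω * X' ω) + β * δ * (Z ω * Z' ω)) μ :=
    (h3.const_mul _).add g4
  have g2 : Integrable (fun ω => α * δ * (X ω * Z' ω)
      + (β * γ * (Z ω * X' ω) + β * δ * (Z ω * Z' ω))) μ := (h2.const_mul _).add g3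
  have heq : (fun ω => (α * X ω + β * Z ω) * (γ * X' ω + δ * Z' ω))
      = fun ω => α * γ * (X ω * X' ω) + (α * δ * (X ω * Z' ω)
        + (β * γ * (Z ω * X' ω) + β * δ * (Z ω * Z' ω))) := by
    funext ω; ring
  rw [heq, integral_add (h1.const_mul _) g2, integral_add (h2.const_mul _) g3,
    integral_add (h3.const_mul _) g4,
    integral_const_mul, integral_const_mul, integral_const_mul, integral_const_mul]
  ring

lemma aux_mean_lin {Ω : Type*} [MeasurableSpace Ω] (μ : Measure Ω) (X Z : Ω → ℝ) (α β : ℝ)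
    (hX : Integrable X μ) (hZ : Integrable Z μ)
    (hXm : ∫ ω, X ω ∂μ = 0) (hZm : ∫ ω, Z ω ∂μ = 0) :
    ∫ ω, (α * X ω + β * Z ω) ∂μ = 0 := by
  rw [integral_add (hX.const_mul α) (hZ.const_mul β), integral_const_mul, integral_const_mul,
    hXm, hZm]
  ring

lemma aux_spin_not (b : Bool) : spin (!b) = -spin b := by cases b <;> simp [spin]

lemma aux_spin_mul_self (b : Bool) : spin b * spin b = 1 := by cases b <;> simp [spin]

lemma aux_flp_ne {L : ℕ} (h : Fin L → Bool) {k t : Fin L} (hne : t ≠ k) : flp h k t = h t :=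
  Function.update_of_ne hne _ _

lemma aux_flp_self {L : ℕ} (h : Fin L → Bool) (k : Fin L) : flp h k k = !h k :=
  Function.update_self _ _ _

lemma aux_delta_eq {L : ℕ} (m : Fin L → Fin L) (hminv : ∀ i, m (m i) = i)
    (hmne : ∀ i, m i ≠ i)
    (R : Finset (Fin L)) (hR : ∀ i, i ∈ R ↔ m i ∉ R)
    (sv Jv : Fin L → ℝ) (hJsym : ∀ i, Jv (m i) = Jv i)
    (h : Fin L → Bool) (k : Fin L) :
    ((1:ℝ)/2 * ∑ t : Fin L, sv t * spin (flp h k t)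
      + ∑ t ∈ R, Jv t * spin (flp h k t) * spin (flp h k (m t)))
    - ((1:ℝ)/2 * ∑ t : Fin L, sv t * spin (h t)
      + ∑ t ∈ R, Jv t * spin (h t) * spin (h (m t)))
    = (-(spin (h k))) * sv k
      + (-(2 * (spin (h k) * spin (h (m k))))) * Jv k := by
  have hmkk : m k ≠ k := hmne k
  have hfield : ∑ t : Fin L, sv t * spin (flp h k t) - ∑ t : Fin L, sv t * spin (h t)
      = -(2 * (sv k * spin (h k))) := by
    rw [← Finset.sum_sub_distrib]
    rw [Finset.sum_eq_single k]
    · rw [aux_flp_self, aux_spin_not]; ring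
    · intro t _ htk
      rw [aux_flp_ne h htk, sub_self]
    · intro hk; exact absurd (Finset.mem_univ k) hk
  have hint : (∑ t ∈ R, Jv t * spin (flp h k t) * spin (flp h k (m t)))
      - ∑ t ∈ R, Jv t * spin (h t) * spin (h (m t))
      = -(2 * (Jv k * (spin (h k) * spin (h (m k))))) := by
    rw [← Finset.sum_sub_distrib]
    by_cases hkR : k ∈ R
    · rw [Finset.sum_eq_single_of_mem k hkR]
      · rw [aux_flp_self, aux_flp_ne h hmkk, aux_spin_not]; ring
      · intro t htR htk
        have htmk : m t ≠ k := by
          intro hc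
          have ht : t = m k := by rw [← hc, hminv]
          rw [ht] at htR
          exact ((hR k).mp hkR) htR
        rw [aux_flp_ne h htk, aux_flp_ne h htmk, sub_self]
    · have hmkR : m k ∈ R := by
        by_contra hc
        exact hkR ((hR k).mpr hc)
      rw [Finset.sum_eq_single_of_mem (m k) hmkR]
      · rw [hminv, aux_flp_ne h hmkk, aux_flp_self, aux_spin_not, hJsym]; ring
      · intro t htR htmk
        have htk : t ≠ k := fun hc => hkR (hc ▸ htR)
        have htmk2 : m t ≠ k := by
          intro hc
          exact htmk (by rw [← hc, hminv])
        rw [aux_flp_ne h htk, aux_flp_ne h htmk2, sub_self]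
  linear_combination (1/2 : ℝ) * hfield + hint

lemma aux_arcsin_key {u : ℝ} (huh : 1/2 < u) (hu1 : u < 1) :
    Real.pi/2 < Real.arcsin (1 - 2*u) + 3 * Real.arcsin u := by
  have hπ : 0 < Real.pi := Real.pi_pos
  have hu0 : (0:ℝ) ≤ u := by linarith
  have hs3 : Real.sqrt 3 ^ 2 = 3 := Real.sq_sqrt (by norm_num)
  have hs30 : (0:ℝ) < Real.sqrt 3 := Real.sqrt_pos.mpr (by norm_num)
  by_cases hu2 : u^2 ≤ 3/4
  · set θ := Real.arcsin u with hθ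
    have hθ0 : 0 ≤ θ := Real.arcsin_nonneg.mpr hu0
    have hθle : θ ≤ Real.pi/3 := by
      rw [hθ]
      rw [Real.arcsin_le_iff_le_sin ⟨by linarith, by linarith⟩ ⟨by linarith, by linarith⟩]
      rw [Real.sin_pi_div_three]
      nlinarith
    have hx : Real.pi/2 - 3*θ ∈ Set.Icc (-(Real.pi/2)) (Real.pi/2) :=
      ⟨by linarith, by linarith⟩
    have hmain : Real.sin (Real.pi/2 - 3*θ) < 1 - 2*u := by
      rw [Real.sin_pi_div_two_sub, Real.cos_three_mul]
      rw [hθ, Real.cos_arcsin]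
      set c := Real.sqrt (1 - u^2) with hc
      have hc0 : 0 ≤ c := Real.sqrt_nonneg _
      have hc2 : c^2 = 1 - u^2 := Real.sq_sqrt (by nlinarith)
      have hchalf : 1/2 ≤ c := by nlinarith
      have h3c : c^3 = (1 - u^2) * c := by rw [pow_succ, hc2]
      have hprod : 0 < c*(2*u+1) - 1 := by nlinarith
      nlinarith [mul_pos (show (0:ℝ) < 2*u-1 by linarith) hprod]
    have h := (Real.lt_arcsin_iff_sin_lt hx ⟨by linarith, by linarith⟩).mpr hmain
    linarith
  · push_neg at hu2
    have h1 : Real.sin (Real.pi/3) < u := by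
      rw [Real.sin_pi_div_three]
      nlinarith
    have h2 : Real.pi/3 < Real.arcsin u :=
      (Real.lt_arcsin_iff_sin_lt ⟨by linarith, by linarith⟩ ⟨by linarith, by linarith⟩).mpr h1
    have h3 : -(Real.pi/2) < Real.arcsin (1 - 2*u) :=
      Real.neg_pi_div_two_lt_arcsin.mpr (by linarith)
    linarith

lemma aux_arcsin_ineq {S T : ℝ} (hS : 0 < S) (hT : 0 < T) (hlt : S < T) :
    1 - (2/Real.pi) * (Real.arcsin ((S - T)/(S+T)) + 2 * Real.arcsin (T/(S+T)))
      < (2/Real.pi) * Real.arcsin (T/(S+T)) := by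
  have hπ : 0 < Real.pi := Real.pi_pos
  have hD : 0 < S + T := by linarith
  set u := T / (S+T) with hu
  have huh : 1/2 < u := by rw [hu, lt_div_iff₀ hD]; linarith
  have hu1 : u < 1 := by rw [hu, div_lt_one hD]; linarith
  have hv : (S - T)/(S+T) = 1 - 2*u := by rw [hu]; field_simp; ring
  rw [hv]
  have key := aux_arcsin_key huh hu1
  have h2π : 0 < 2/Real.pi := by positivity
  have hm := mul_lt_mul_of_pos_left key h2π
  have h1 : (2/Real.pi) * (Real.pi/2) = 1 := by field_simp
  rw [h1, mul_add] at hm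
  linarith

lemma aux_cov_eq {Ω : Type*} [MeasurableSpace Ω] {μ : Measure Ω} {U V : Ω → ℝ}
    (hU : ∫ ω, U ω ∂μ = 0) (hV : ∫ ω, V ω ∂μ = 0) :
    cov μ U V = ∫ ω, U ω * V ω ∂μ := by
  unfold cov
  rw [hU, hV]
  simp

/-- in the sparse pairwise allelic-incompatibility (Ising) model with a
perfect-matching interaction graph (`I = 1`), fields `sᵢ ~ N(0, σ_s²)` and couplings
`J ~ N(0, σ_J²)`, for matched partners `i, j`: `Var[Δᵢf(g)] = σ_s² + 4σ_J²`,
`Cov[Δᵢf(g), Δⱼf(g)] = 4σ_J²`, `Cov[Δᵢf(g), Δᵢf(g_[j])] = σ_s² − 4σ_J²`; and whenever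
`4σ_J² > σ_s²`, the conditional RSE probability
`(2/π)·arcsin(4σ_J²/(σ_s²+4σ_J²))` exceeds the conditional SSE probability
`1 − (2/π)·[arcsin((σ_s²−4σ_J²)/(σ_s²+4σ_J²)) + 2·arcsin(4σ_J²/(σ_s²+4σ_J²))]`:
reciprocal sign epistasis dominates among strongly interacting pairs. -/
theorem stmt_18 (L : ℕ) {Ω : Type*} [MeasurableSpace Ω]
    (μ : Measure Ω) [IsProbabilityMeasure μ]
    (σs2 σJ2 : NNReal) (hσs : 0 < σs2) (hσJ : 0 < σJ2)
    (m : Fin L → Fin L) (hminv : ∀ i, m (m i) = i) (hmne : ∀ i, m i ≠ i)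
    (R : Finset (Fin L)) (hR : ∀ i, i ∈ R ↔ m i ∉ R)
    (s : Ω → Fin L → ℝ) (J : Ω → Fin L → ℝ)
    (hmeass : ∀ i, Measurable fun ω => s ω i)
    (hmeasJ : ∀ i, Measurable fun ω => J ω i)
    (hJsym : ∀ ω i, J ω (m i) = J ω i)
    (hindep : iIndepFun
      (Sum.elim (fun (i : Fin L) ω => s ω i)
                (fun (k : { i : Fin L // i ∈ R }) ω => J ω k.1) ) μ)
    (hs : ∀ i, Measure.map (fun ω => s ω i) μ = gaussianReal 0 σs2)
    (hJ : ∀ k ∈ R, Measure.map (fun ω => J ω k) μ = gaussianReal 0 σJ2)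
    (f : Ω → (Fin L → Bool) → ℝ)
    (hf : ∀ ω g, f ω g = (1 / 2) * ∑ i : Fin L, s ω i * spin (g i) +
      ∑ i ∈ R, J ω i * spin (g i) * spin (g (m i)))
    (g : Fin L → Bool) (i j : Fin L) (hij : m i = j) :
    variance (fun ω => f ω (flp g i) - f ω g) μ = σs2 + 4 * σJ2 ∧
    cov μ (fun ω => f ω (flp g i) - f ω g) (fun ω => f ω (flp g j) - f ω g)
      = 4 * σJ2 ∧
    cov μ (fun ω => f ω (flp g i) - f ω g)
          (fun ω => f ω (flp (flp g j) i) - f ω (flp g j))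
      = (σs2 : ℝ) - 4 * σJ2 ∧
    ((σs2 : ℝ) < 4 * σJ2 →
      1 - (2 / Real.pi) *
          (Real.arcsin (((σs2 : ℝ) - 4 * σJ2) / ((σs2 : ℝ) + 4 * σJ2)) +
            2 * Real.arcsin ((4 * σJ2) / ((σs2 : ℝ) + 4 * σJ2)))
        < (2 / Real.pi) * Real.arcsin ((4 * σJ2) / ((σs2 : ℝ) + 4 * σJ2))) := by
  have hji : j ≠ i := hij ▸ hmne i
  have hijne : i ≠ j := fun hc => hji hc.symm
  have hmj : m j = i := by rw [← hij, hminv]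
  have hσs' : σs2 ≠ 0 := hσs.ne'
  have hσJ' : σJ2 ≠ 0 := hσJ.ne'
  -- pointwise formula for fitness effects
  have key : ∀ (h : Fin L → Bool) (k : Fin L) (ω : Ω),
      f ω (flp h k) - f ω h
        = (-(spin (h k))) * s ω k + (-(2 * (spin (h k) * spin (h (m k))))) * J ω k := by
    intro h k ω
    rw [hf, hf]
    exact aux_delta_eq m hminv hmne R hR (s ω) (J ω) (fun t => hJsym ω t) h k
  have hU : (fun ω => f ω (flp g i) - f ω g)
      = fun ω => (-(spin (g i))) * s ω i + (-(2 * (spin (g i) * spin (g j)))) * J ω i := by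
    funext ω; rw [key g i ω, hij]
  have hV : (fun ω => f ω (flp g j) - f ω g)
      = fun ω => (-(spin (g j))) * s ω j + (-(2 * (spin (g j) * spin (g i)))) * J ω i := by
    funext ω
    rw [key g j ω, hmj]
    have hJj : J ω j = J ω i := by rw [← hij, hJsym]
    rw [hJj]
  have hW : (fun ω => f ω (flp (flp g j) i) - f ω (flp g j))
      = fun ω => (-(spin (g i))) * s ω i + (2 * (spin (g i) * spin (g j))) * J ω i := by
    funext ω
    rw [key (flp g j) i ω, hij, aux_flp_ne g hijne, aux_flp_self, aux_spin_not]
    ring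
  -- moments
  obtain ⟨hX2, hXm, hXsq⟩ := aux_rv_moments μ (hmeass i) hσs' (hs i)
  obtain ⟨hY2, hYm, hYsq⟩ := aux_rv_moments μ (hmeass j) hσs' (hs j)
  have hK : ∃ k, k ∈ R ∧ ∀ ω, J ω k = J ω i := by
    by_cases hiR : i ∈ R
    · exact ⟨i, hiR, fun ω => rfl⟩
    · refine ⟨j, ?_, fun ω => by rw [← hij, hJsym]⟩
      have hRi := hR i
      rw [hij] at hRi
      by_contra hc
      exact hiR (hRi.mpr hc)
  obtain ⟨k, hkR, hkJ⟩ := hK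
  have hkfun : (fun ω => J ω k) = fun ω => J ω i := funext hkJ
  have hmapZ : Measure.map (fun ω => J ω i) μ = gaussianReal 0 σJ2 := by
    rw [← hkfun]; exact hJ k hkR
  obtain ⟨hZ2, hZm, hZsq⟩ := aux_rv_moments μ (hmeasJ i) hσJ' hmapZ
  -- independence
  have hXY : IndepFun (fun ω => s ω i) (fun ω => s ω j) μ :=
    hindep.indepFun (i := Sum.inl i) (j := Sum.inl j) (by simp [hijne])
  have hXZ : IndepFun (fun ω => s ω i) (fun ω => J ω i) μ := by
    rw [← hkfun]
    exact hindep.indepFun (i := Sum.inl i) (j := Sum.inr ⟨k, hkR⟩) (by simp)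
  have hYZ : IndepFun (fun ω => s ω j) (fun ω => J ω i) μ := by
    rw [← hkfun]
    exact hindep.indepFun (i := Sum.inl j) (j := Sum.inr ⟨k, hkR⟩) (by simp)
  -- integrabilities
  have hXint : Integrable (fun ω => s ω i) μ := hX2.integrable one_le_two
  have hYint : Integrable (fun ω => s ω j) μ := hY2.integrable one_le_two
  have hZint : Integrable (fun ω => J ω i) μ := hZ2.integrable one_le_two
  have hXY' : Integrable (fun ω => s ω i * s ω j) μ := hXY.integrable_mul hXint hYint
  have hXZ' : Integrable (fun ω => s ω i * J ω i) μ := hXZ.integrable_mul hXint hZint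
  have hZX' : Integrable (fun ω => J ω i * s ω i) μ := by simpa [mul_comm] using hXZ'
  have hYZ' : Integrable (fun ω => s ω j * J ω i) μ := hYZ.integrable_mul hYint hZint
  have hZY' : Integrable (fun ω => J ω i * s ω j) μ := by simpa [mul_comm] using hYZ'
  have hXX' : Integrable (fun ω => s ω i * s ω i) μ := by
    have h := hX2.integrable_sq
    simpa [pow_two] using h
  have hZZ' : Integrable (fun ω => J ω i * J ω i) μ := by
    have h := hZ2.integrable_sq
    simpa [pow_two] using h
  -- integral values
  have hIXY : ∫ ω, s ω i * s ω j ∂μ = 0 := by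
    rw [hXY.integral_fun_mul_eq_mul_integral hXint.aestronglyMeasurable hYint.aestronglyMeasurable, hXm, zero_mul]
  have hIXZ : ∫ ω, s ω i * J ω i ∂μ = 0 := by
    rw [hXZ.integral_fun_mul_eq_mul_integral hXint.aestronglyMeasurable hZint.aestronglyMeasurable, hXm, zero_mul]
  have hIZX : ∫ ω, J ω i * s ω i ∂μ = 0 := by
    simp_rw [mul_comm]; exact hIXZ
  have hIYZ : ∫ ω, s ω j * J ω i ∂μ = 0 := by
    rw [hYZ.integral_fun_mul_eq_mul_integral hYint.aestronglyMeasurable hZint.aestronglyMeasurable, hYm, zero_mul]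
  have hIZY : ∫ ω, J ω i * s ω j ∂μ = 0 := by
    simp_rw [mul_comm]; exact hIYZ
  have hIXX : ∫ ω, s ω i * s ω i ∂μ = (σs2 : ℝ) := by
    simp_rw [pow_two] at hXsq; exact hXsq
  have hIZZ : ∫ ω, J ω i * J ω i ∂μ = (σJ2 : ℝ) := by
    simp_rw [pow_two] at hZsq; exact hZsq
  -- means of the combinations
  have hUm := aux_mean_lin μ _ _ (-(spin (g i))) (-(2 * (spin (g i) * spin (g j))))
    hXint hZint hXm hZm
  have hVm := aux_mean_lin μ _ _ (-(spin (g j))) (-(2 * (spin (g j) * spin (g i))))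
    hYint hZint hYm hZm
  have hWm := aux_mean_lin μ _ _ (-(spin (g i))) (2 * (spin (g i) * spin (g j)))
    hXint hZint hXm hZm
  have hspin_i := aux_spin_mul_self (g i)
  have hspin_j := aux_spin_mul_self (g j)
  refine ⟨?_, ?_, ?_, ?_⟩
  · -- variance
    rw [hU]
    have hUmem : MemLp (fun ω => (-(spin (g i))) * s ω i
        + (-(2 * (spin (g i) * spin (g j)))) * J ω i) 2 μ :=
      (hX2.const_mul _).add (hZ2.const_mul _)
    rw [variance_eq_sub hUmem]
    have hsq : (fun ω => (-(spin (g i))) * s ω i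
          + (-(2 * (spin (g i) * spin (g j)))) * J ω i) ^ 2
        = fun ω => ((-(spin (g i))) * s ω i + (-(2 * (spin (g i) * spin (g j)))) * J ω i)
            * ((-(spin (g i))) * s ω i + (-(2 * (spin (g i) * spin (g j)))) * J ω i) := by
      funext ω; simp [pow_two]
    rw [hsq,
      aux_integral_quad μ _ _ _ _ _ _ _ _ hXX' hXZ' hZX' hZZ', hUm,
      hIXX, hIXZ, hIZX, hIZZ]
    linear_combination ((σs2 : ℝ) + 4 * (σJ2 : ℝ) * (spin (g j) * spin (g j))) * hspin_i
      + 4 * (σJ2 : ℝ) * hspin_j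
  · -- cov Δi Δj
    rw [hU, hV, aux_cov_eq hUm hVm,
      aux_integral_quad μ _ _ _ _ _ _ _ _ hXY' hXZ' hZY' hZZ',
      hIXY, hIXZ, hIZY, hIZZ]
    linear_combination 4 * (σJ2 : ℝ) * (spin (g j) * spin (g j)) * hspin_i
      + 4 * (σJ2 : ℝ) * hspin_j
  · -- cov Δi(g) Δi(g flipped at j)
    rw [hU, hW, aux_cov_eq hUm hWm,
      aux_integral_quad μ _ _ _ _ _ _ _ _ hXX' hXZ' hZX' hZZ',
      hIXX, hIXZ, hIZX, hIZZ]
    linear_combination ((σs2 : ℝ) - 4 * (σJ2 : ℝ) * (spin (g j) * spin (g j))) * hspin_i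
      - 4 * (σJ2 : ℝ) * hspin_j
  · -- arcsin inequality
    intro hlt
    have hS : (0:ℝ) < σs2 := NNReal.coe_pos.mpr hσs
    have hT : (0:ℝ) < 4 * σJ2 := by
      have := NNReal.coe_pos.mpr hσJ
      linarith
    exact aux_arcsin_ineq hS hT hlt
end
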